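/- arXiv:2211.04782 — 7 statements merged into one kernel-verified Lean document; each statement's English description precedes it below -/
import Mathlib

section
/- Let M be a bounded self-adjoint positive semidefinite linear operator with closed range on a real Hilbert space H, and let M = C C* and M = C̃ C̃* be two onto decompositions, with C : D → H and C̃ : D̃ → H. Then there exists a bounded linear isomorphism O : D → D̃ with O⁻¹ = O* such that C = C̃ ∘ O. -/
open scoped InnerProductSpace

/-- Uniqueness (modulo orthogonal transformations) of onto decompositions of a
bounded self-adjoint positive semidefinite operator with closed range: if `M = C C*` and
`M = C̃ C̃*` with `C : D → H`, `C̃ : D̃ → H` injective and `C*`, `C̃*` onto, then there is a bounded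
linear isomorphism `O : D → D̃` with `O⁻¹ = O*` and `C = C̃ ∘ O`. -/
theorem onto_decomposition_unique
    {H D D' : Type*}
    [NormedAddCommGroup H] [InnerProductSpace ℝ H] [CompleteSpace H]
    [NormedAddCommGroup D] [InnerProductSpace ℝ D] [CompleteSpace D]
    [NormedAddCommGroup D'] [InnerProductSpace ℝ D'] [CompleteSpace D']
    (M : H →L[ℝ] H) (hsa : IsSelfAdjoint M) (hpos : ∀ u : H, 0 ≤ ⟪M u, u⟫_ℝ)
    (hclosed : IsClosed (Set.range M))
    (C : D →L[ℝ] H) (hCinj : Function.Injective C)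
    (hCadj : Function.Surjective (ContinuousLinearMap.adjoint C))
    (hMC : M = C ∘L (ContinuousLinearMap.adjoint C))
    (C' : D' →L[ℝ] H) (hC'inj : Function.Injective C')
    (hC'adj : Function.Surjective (ContinuousLinearMap.adjoint C'))
    (hMC' : M = C' ∘L (ContinuousLinearMap.adjoint C')) :
    ∃ O : D ≃L[ℝ] D',
      ContinuousLinearMap.adjoint (O : D →L[ℝ] D') = (O.symm : D' →L[ℝ] D) ∧
      C = C' ∘L (O : D →L[ℝ] D') := by
  classical
  set A := ContinuousLinearMap.adjoint C with hA
  set A' := ContinuousLinearMap.adjoint C' with hA'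
  have key : ∀ x y : H, ⟪A' x, A' y⟫_ℝ = ⟪A x, A y⟫_ℝ := by
    intro x y
    have h1 : ⟪A' x, A' y⟫_ℝ = ⟪x, M y⟫_ℝ := by
      rw [hA', ContinuousLinearMap.adjoint_inner_left, hMC']; rfl
    have h2 : ⟪A x, A y⟫_ℝ = ⟪x, M y⟫_ℝ := by
      rw [hA, ContinuousLinearMap.adjoint_inner_left, hMC]; rfl
    rw [h1, h2]
  have key0 : ∀ x : H, A x = 0 → A' x = 0 := by
    intro x hx
    have h := key x x
    rw [hx, inner_zero_left, inner_self_eq_zero] at h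
    exact h
  set g : D → H := Function.surjInv hCadj with hgdef
  have hg : ∀ u : D, A (g u) = u := fun u => Function.surjInv_eq hCadj u
  set f : D → D' := fun u => A' (g u) with hfdef
  have hf : ∀ x : H, f (A x) = A' x := by
    intro x
    have h0 : A (g (A x) - x) = 0 := by rw [map_sub, hg, sub_self]
    have h1 := key0 _ h0
    rw [map_sub, sub_eq_zero] at h1
    exact h1
  have fadd : ∀ u v : D, f (u + v) = f u + f v := by
    intro u v
    have h : u + v = A (g u + g v) := by rw [map_add, hg, hg]
    rw [h, hf, map_add]
  have fsmul : ∀ (c : ℝ) (u : D), f (c • u) = c • f u := by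
    intro c u
    have h : c • u = A (c • g u) := by rw [map_smul, hg]
    rw [h, hf, map_smul]
  let L : D →ₗ[ℝ] D' :=
    { toFun := f, map_add' := fadd, map_smul' := fsmul }
  have hinner : ∀ u v : D, ⟪L u, L v⟫_ℝ = ⟪u, v⟫_ℝ := by
    intro u v
    show ⟪A' (g u), A' (g v)⟫_ℝ = ⟪u, v⟫_ℝ
    rw [key, hg, hg]
  let li : D →ₗᵢ[ℝ] D' := L.isometryOfInner hinner
  have hsurj : Function.Surjective li := by
    intro w
    obtain ⟨x, hx⟩ := hC'adj w
    exact ⟨A x, by rw [show li (A x) = f (A x) from rfl, hf]; exact hx⟩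
  let e : D ≃ₗᵢ[ℝ] D' := LinearIsometryEquiv.ofSurjective li hsurj
  have he : ∀ u : D, e u = f u := fun u => rfl
  refine ⟨e.toContinuousLinearEquiv, ?_, ?_⟩
  · symm
    rw [ContinuousLinearMap.eq_adjoint_iff]
    intro v u
    have : (e.toContinuousLinearEquiv.symm : D' →L[ℝ] D) v = e.symm v := rfl
    rw [this]
    calc ⟪e.symm v, u⟫_ℝ = ⟪e (e.symm v), e u⟫_ℝ := (e.inner_map_map _ _).symm
      _ = ⟪v, (e.toContinuousLinearEquiv : D →L[ℝ] D') u⟫_ℝ := by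
          rw [e.apply_symm_apply]; rfl
  · ext u
    have h1 : C u = M (g u) := by rw [hMC]; show C u = C (A (g u)); rw [hg]
    have h2 : M (g u) = C' (A' (g u)) := by rw [hMC']; rfl
    show C u = C' ((e.toContinuousLinearEquiv : D →L[ℝ] D') u)
    rw [h1, h2]
    rfl
end

section
/- Let A be a maximal monotone set-valued operator on a real Hilbert space H with zer A = {u : 0 ∈ A u} nonempty, let M be an admissible preconditioner for A with closed range, and let M = C C* be an onto decomposition with C : D → H. Let θ_k ∈ (0,2] satisfy Σ_k θ_k(2 − θ_k) = +∞, let T̃ : D → D be the (single-valued) map T̃ w = C* y where y is the unique point with Cw − My ∈ A y, and define from any w^0 ∈ D the reduced sequence w^{k+1} = w^k + θ_k(T̃ w^k − w^k). Then: (1) w^k converges weakly in D to a point w* such that the unique u* with Cw* − Mu* ∈ A u* satisfies 0 ∈ A u*; (2) if the map w ↦ (unique y with w − My ∈ A y) is Lipschitz continuous on H, then the sequence of points y^k determined by Cw^k − My^k ∈ A y^k converges weakly to u*. -/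
open scoped InnerProductSpace Topology
open Filter

/-- A set-valued operator on a real inner product space is monotone. -/
def IsMonotoneOp {K : Type*} [NormedAddCommGroup K] [InnerProductSpace ℝ K]
    (A : K → Set K) : Prop :=
  ∀ x y u v : K, u ∈ A x → v ∈ A y → 0 ≤ ⟪u - v, x - y⟫_ℝ

/-- A set-valued operator is maximal monotone. -/
def IsMaxMonotone {K : Type*} [NormedAddCommGroup K] [InnerProductSpace ℝ K]
    (A : K → Set K) : Prop :=
  IsMonotoneOp A ∧ ∀ x u : K, (∀ y v : K, v ∈ A y → 0 ≤ ⟪u - v, x - y⟫_ℝ) → u ∈ A x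

/-- Weak convergence of a sequence in an inner product space. -/
def WeakLim {K : Type*} [NormedAddCommGroup K] [InnerProductSpace ℝ K]
    (u : ℕ → K) (l : K) : Prop :=
  ∀ h : K, Tendsto (fun k => ⟪u k, h⟫_ℝ) atTop (𝓝 ⟪l, h⟫_ℝ)

/-- Every bounded real sequence has a limit along any ultrafilter. -/
lemma ultrafilter_bdd_limit (f : ℕ → ℝ) (R : ℝ) (hf : ∀ k, |f k| ≤ R) (U : Ultrafilter ℕ) :
    ∃ c, Tendsto f (U : Filter ℕ) (𝓝 c) ∧ |c| ≤ R := by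
  have hmem : (Ultrafilter.map f U : Filter ℝ) ≤ 𝓟 (Set.Icc (-R) R) := by
    rw [le_principal_iff, Ultrafilter.mem_coe, Ultrafilter.mem_map]
    have : ∀ k, f k ∈ Set.Icc (-R) R := fun k => abs_le.mp (hf k)
    exact Filter.univ_mem' this
  obtain ⟨c, hc, hle⟩ := (isCompact_Icc (a := -R) (b := R)).ultrafilter_le_nhds
    (Ultrafilter.map f U) hmem
  exact ⟨c, hle, abs_le.mpr hc⟩

/-- Every bounded sequence in a real Hilbert space has a weak limit along any ultrafilter. -/
lemma ultrafilter_weak_limit {E : Type*} [NormedAddCommGroup E] [InnerProductSpace ℝ E]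
    [CompleteSpace E] (u : ℕ → E) (R : ℝ) (hb : ∀ k, ‖u k‖ ≤ R) (U : Ultrafilter ℕ) :
    ∃ x : E, ∀ h : E, Tendsto (fun k => ⟪u k, h⟫_ℝ) (U : Filter ℕ) (𝓝 ⟪x, h⟫_ℝ) := by
  have hbd : ∀ h : E, ∀ k, |⟪u k, h⟫_ℝ| ≤ R * ‖h‖ := fun h k => by
    calc |⟪u k, h⟫_ℝ| ≤ ‖u k‖ * ‖h‖ := abs_real_inner_le_norm _ _
    _ ≤ R * ‖h‖ := by gcongr; exact hb k
  have key : ∀ h : E, ∃ c, Tendsto (fun k => ⟪u k, h⟫_ℝ) (U : Filter ℕ) (𝓝 c) ∧ |c| ≤ R * ‖h‖ :=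
    fun h => ultrafilter_bdd_limit _ _ (hbd h) U
  choose c hc hcb using key
  have hadd : ∀ a b : E, c (a + b) = c a + c b := by
    intro a b
    have h1 : Tendsto (fun k => ⟪u k, a + b⟫_ℝ) (U : Filter ℕ) (𝓝 (c a + c b)) := by
      simpa [inner_add_right] using (hc a).add (hc b)
    exact tendsto_nhds_unique (hc (a + b)) h1
  have hsmul : ∀ (r : ℝ) (a : E), c (r • a) = r * c a := by
    intro r a
    have h1 : Tendsto (fun k => ⟪u k, r • a⟫_ℝ) (U : Filter ℕ) (𝓝 (r * c a)) := by
      simpa [inner_smul_right] using (hc a).const_mul r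
    exact tendsto_nhds_unique (hc (r • a)) h1
  let f : E →ₗ[ℝ] ℝ := { toFun := c, map_add' := hadd, map_smul' := hsmul }
  let F : E →L[ℝ] ℝ := LinearMap.mkContinuous f R (fun h => by
    simpa [f, Real.norm_eq_abs] using hcb h)
  refine ⟨(InnerProductSpace.toDual ℝ E).symm F, fun h => ?_⟩
  have : ⟪(InnerProductSpace.toDual ℝ E).symm F, h⟫_ℝ = F h := by
    rw [← InnerProductSpace.toDual_apply_apply]
    simp
  rw [this]
  exact hc h

set_option maxHeartbeats 1600000

/-- Convergence of the reduced preconditioned proximal point method: the reduced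
sequence `w^{k+1} = w^k + θ_k (T̃ w^k − w^k)`, with `T̃ w = C* y(w)` where `y(w)` is the unique
point with `C w − M y ∈ A y`, converges weakly to some `w*` whose associated point `u*`
(`C w* − M u* ∈ A u*`) is a zero of `A`; and if `(M + A)⁻¹` is Lipschitz the points `y(w^k)`
converge weakly to `u*`. -/
theorem reduced_PPP_convergence
    {H D : Type*}
    [NormedAddCommGroup H] [InnerProductSpace ℝ H] [CompleteSpace H]
    [NormedAddCommGroup D] [InnerProductSpace ℝ D] [CompleteSpace D]
    (A : H → Set H) (hA : IsMaxMonotone A) (hzer : ∃ u : H, (0 : H) ∈ A u)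
    (M : H →L[ℝ] H) (hsa : IsSelfAdjoint M) (hpos : ∀ u : H, 0 ≤ ⟪M u, u⟫_ℝ)
    (hadm : ∀ u : H, ∃! v : H, M u - M v ∈ A v)
    (hclosed : IsClosed (Set.range M))
    (C : D →L[ℝ] H) (hCinj : Function.Injective C)
    (hCadj : Function.Surjective (ContinuousLinearMap.adjoint C))
    (hMC : M = C ∘L (ContinuousLinearMap.adjoint C))
    (θ : ℕ → ℝ) (hθ : ∀ k, θ k ∈ Set.Ioc (0 : ℝ) 2)
    (hθdiv : Tendsto (fun n => ∑ k ∈ Finset.range n, θ k * (2 - θ k)) atTop atTop)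
    (y : D → H) (hy : ∀ v : D, C v - M (y v) ∈ A (y v))
    (w : ℕ → D)
    (hrec : ∀ k : ℕ,
      w (k + 1) = w k + θ k • (ContinuousLinearMap.adjoint C (y (w k)) - w k)) :
    ∃ (wstar : D) (ustar : H),
      WeakLim w wstar ∧ (C wstar - M ustar ∈ A ustar) ∧ (0 : H) ∈ A ustar ∧
      ((∃ K : ℝ, ∀ u1 u2 y1 y2 : H, u1 - M y1 ∈ A y1 → u2 - M y2 ∈ A y2 →
          ‖y1 - y2‖ ≤ K * ‖u1 - u2‖) →
        WeakLim (fun k => y (w k)) ustar) := by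
  have hM : ∀ h : H, M h = C (ContinuousLinearMap.adjoint C h) := fun h => by rw [hMC]; rfl
  set T : D → D := fun v => ContinuousLinearMap.adjoint C (y v) with hT
  -- firm nonexpansiveness
  have hfirm : ∀ v1 v2 : D, ‖T v1 - T v2‖^2 ≤ ⟪v1 - v2, T v1 - T v2⟫_ℝ := by
    intro v1 v2
    have h0 := hA.1 (y v1) (y v2) _ _ (hy v1) (hy v2)
    have heq : (C v1 - M (y v1)) - (C v2 - M (y v2)) = C ((v1 - v2) - (T v1 - T v2)) := by
      simp only [hM, hT, map_sub]
      abel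
    rw [heq, ← ContinuousLinearMap.adjoint_inner_right] at h0
    have h2 : ContinuousLinearMap.adjoint C (y v1 - y v2) = T v1 - T v2 := by
      simp [hT, map_sub]
    rw [h2, inner_sub_left, real_inner_self_eq_norm_sq] at h0
    linarith
  -- nonexpansiveness
  have hnon : ∀ v1 v2 : D, ‖T v1 - T v2‖ ≤ ‖v1 - v2‖ := by
    intro v1 v2
    have h1 := hfirm v1 v2
    have h2 : ⟪v1 - v2, T v1 - T v2⟫_ℝ ≤ ‖v1 - v2‖ * ‖T v1 - T v2‖ := real_inner_le_norm _ _
    nlinarith [norm_nonneg (T v1 - T v2), norm_nonneg (v1 - v2)]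
  -- nonexpansiveness of the reflected operator
  have hS : ∀ v1 v2 : D, ‖((2:ℝ) • T v1 - v1) - ((2:ℝ) • T v2 - v2)‖ ≤ ‖v1 - v2‖ := by
    intro v1 v2
    have hid : ((2:ℝ) • T v1 - v1) - ((2:ℝ) • T v2 - v2)
        = (2:ℝ) • (T v1 - T v2) - (v1 - v2) := by module
    have hsq : ‖(2:ℝ) • (T v1 - T v2) - (v1 - v2)‖^2
        = 4 * ‖T v1 - T v2‖^2 - 4 * ⟪v1 - v2, T v1 - T v2⟫_ℝ + ‖v1 - v2‖^2 := by
      rw [norm_sub_sq_real, norm_smul, real_inner_smul_left, real_inner_comm]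
      simp [Real.norm_eq_abs]
      ring
    have h1 := hfirm v1 v2
    rw [hid]
    nlinarith [norm_nonneg ((2:ℝ) • (T v1 - T v2) - (v1 - v2)), norm_nonneg (v1 - v2)]
  -- a fixed point of T
  obtain ⟨u0, hu0⟩ := hzer
  set p : D := ContinuousLinearMap.adjoint C u0 with hpdef
  have hp : T p = p := by
    have hCp : C p = M u0 := (hM u0).symm
    have h1 : M u0 - M (y p) ∈ A (y p) := by rw [← hCp]; exact hy p
    obtain ⟨v, -, hvu⟩ := hadm u0
    have h2 : y p = v := hvu _ h1
    have h3 : u0 = v := hvu _ (show M u0 - M u0 ∈ A u0 by rw [sub_self]; exact hu0)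
    rw [hT]
    simp only
    rw [h2, ← h3, hpdef]
  -- the error sequence
  set e : ℕ → D := fun k => T (w k) - w k with he
  have hrec' : ∀ k, w (k + 1) = w k + θ k • e k := hrec
  -- KM inequality
  have hKM : ∀ (z : D), T z = z → ∀ k,
      ‖w (k+1) - z‖^2 ≤ ‖w k - z‖^2 - θ k * (2 - θ k) * ‖e k‖^2 := by
    intro z hz k
    have hθk := hθ k
    have hfk := hfirm (w k) z
    rw [hz] at hfk
    have hek : e k = (T (w k) - z) - (w k - z) := by simp [he]
    have hwk : w (k+1) - z = (w k - z) + θ k • e k := by rw [hrec' k]; abel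
    have hnorm : ‖w (k+1) - z‖^2
        = ‖w k - z‖^2 + 2 * (θ k * ⟪w k - z, e k⟫_ℝ) + (θ k)^2 * ‖e k‖^2 := by
      rw [hwk, norm_add_sq_real, real_inner_smul_right, norm_smul,
        Real.norm_eq_abs, abs_of_pos hθk.1]
      ring
    have hie : ⟪w k - z, e k⟫_ℝ = ⟪w k - z, T (w k) - z⟫_ℝ - ‖w k - z‖^2 := by
      rw [hek, inner_sub_right, real_inner_self_eq_norm_sq]
    have hen : ‖e k‖^2 = ‖T (w k) - z‖^2 - 2 * ⟪w k - z, T (w k) - z⟫_ℝ + ‖w k - z‖^2 := by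
      rw [hek, norm_sub_sq_real, real_inner_comm]
      all_goals ring
    rw [hnorm, hie]
    nlinarith [hθk.1, hθk.2, mul_nonneg hθk.1.le (sub_nonneg.mpr hfk)]
  have hc_nonneg : ∀ k, 0 ≤ θ k * (2 - θ k) :=
    fun k => mul_nonneg (hθ k).1.le (by linarith [(hθ k).2])
  have hterm_nonneg : ∀ k, 0 ≤ θ k * (2 - θ k) * ‖e k‖^2 :=
    fun k => mul_nonneg (hc_nonneg k) (sq_nonneg _)
  have hmono : ∀ z, T z = z → Antitone fun k => ‖w k - z‖^2 := by
    intro z hz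
    apply antitone_nat_of_succ_le
    intro k
    have := hKM z hz k
    have := hterm_nonneg k
    linarith
  -- partial sums bound
  have hsum : ∀ (z : D), T z = z → ∀ n,
      (∑ k ∈ Finset.range n, θ k * (2 - θ k) * ‖e k‖^2) + ‖w n - z‖^2 ≤ ‖w 0 - z‖^2 := by
    intro z hz n
    induction n with
    | zero => simp
    | succ n ih =>
      rw [Finset.sum_range_succ]
      have := hKM z hz n
      linarith
  -- e is antitone in norm
  have heant : Antitone fun k => ‖e k‖ := by
    apply antitone_nat_of_succ_le
    intro k
    have hθk := hθ k
    have hid : (2:ℝ) • e (k+1)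
        = (((2:ℝ) • T (w (k+1)) - w (k+1)) - ((2:ℝ) • T (w k) - w k)) + (2 - θ k) • e k := by
      rw [he]
      simp only
      rw [hrec' k]
      module
    have h1 : ‖(2:ℝ) • e (k+1)‖ ≤ ‖w (k+1) - w k‖ + (2 - θ k) * ‖e k‖ := by
      rw [hid]
      refine (norm_add_le _ _).trans ?_
      gcongr
      · exact hS _ _
      · rw [norm_smul, Real.norm_eq_abs, abs_of_nonneg (by linarith [hθk.2])]
    have h2 : ‖w (k+1) - w k‖ = θ k * ‖e k‖ := by
      rw [hrec' k]
      simp [norm_smul, Real.norm_eq_abs, abs_of_pos hθk.1]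
    have h3 : ‖(2:ℝ) • e (k+1)‖ = 2 * ‖e (k+1)‖ := by
      simp [norm_smul]
    rw [h3, h2] at h1
    linarith
  -- ‖e k‖ → 0
  have heB : ∀ n, ‖e n‖^2 * (∑ k ∈ Finset.range n, θ k * (2 - θ k)) ≤ ‖w 0 - p‖^2 := by
    intro n
    have h1 : ∀ k ∈ Finset.range n, θ k * (2 - θ k) * ‖e n‖^2 ≤ θ k * (2 - θ k) * ‖e k‖^2 := by
      intro k hk
      have hkn : k ≤ n := (Finset.mem_range.mp hk).le
      have := heant hkn
      have h2 : ‖e n‖^2 ≤ ‖e k‖^2 := by nlinarith [norm_nonneg (e n)]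
      exact mul_le_mul_of_nonneg_left h2 (hc_nonneg k)
    calc ‖e n‖^2 * (∑ k ∈ Finset.range n, θ k * (2 - θ k))
        = ∑ k ∈ Finset.range n, θ k * (2 - θ k) * ‖e n‖^2 := by
          rw [Finset.mul_sum]; exact Finset.sum_congr rfl (fun k _ => by ring)
      _ ≤ ∑ k ∈ Finset.range n, θ k * (2 - θ k) * ‖e k‖^2 := Finset.sum_le_sum h1
      _ ≤ ‖w 0 - p‖^2 := by
          have := hsum p hp n
          nlinarith [sq_nonneg ‖w n - p‖]
  have he0sq : Tendsto (fun n => ‖e n‖^2) atTop (𝓝 0) := by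
    apply squeeze_zero' (Eventually.of_forall fun n => sq_nonneg _)
      (g := fun n => ‖w 0 - p‖^2 / (∑ k ∈ Finset.range n, θ k * (2 - θ k)))
    · filter_upwards [hθdiv.eventually_gt_atTop 0] with n hn
      rw [le_div_iff₀ hn]
      exact heB n
    · exact Tendsto.div_atTop tendsto_const_nhds hθdiv
  have he0 : Tendsto (fun n => ‖e n‖) atTop (𝓝 0) := by
    have h := he0sq.sqrt
    rw [Real.sqrt_zero] at h
    have hfun : (fun n => Real.sqrt (‖e n‖^2)) = fun n => ‖e n‖ :=
      funext fun n => Real.sqrt_sq (norm_nonneg _)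
    rwa [hfun] at h
  -- boundedness of w
  set Rw : ℝ := ‖w 0 - p‖ + ‖p‖ with hRw
  have hwp : ∀ k, ‖w k - p‖ ≤ ‖w 0 - p‖ := by
    intro k
    have h1 : ‖w k - p‖^2 ≤ ‖w 0 - p‖^2 := hmono p hp (Nat.zero_le k)
    nlinarith [norm_nonneg (w k - p), norm_nonneg (w 0 - p)]
  have hbw : ∀ k, ‖w k‖ ≤ Rw := by
    intro k
    calc ‖w k‖ = ‖(w k - p) + p‖ := by rw [sub_add_cancel]
      _ ≤ ‖w k - p‖ + ‖p‖ := norm_add_le _ _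
      _ ≤ Rw := by rw [hRw]; linarith [hwp k]
  -- limits of ‖w k - z‖² exist for fixed points z
  have hLz : ∀ z, T z = z → ∃ L, Tendsto (fun k => ‖w k - z‖^2) atTop (𝓝 L) := by
    intro z hz
    refine ⟨_, tendsto_atTop_ciInf (hmono z hz) ⟨0, ?_⟩⟩
    rintro - ⟨k, rfl⟩
    exact sq_nonneg _
  -- ultrafilter weak cluster points are fixed points
  have hclusterfix : ∀ (V : Ultrafilter ℕ), (V : Filter ℕ) ≤ atTop → ∀ x : D,
      (∀ h, Tendsto (fun k => ⟪w k, h⟫_ℝ) (V : Filter ℕ) (𝓝 ⟪x, h⟫_ℝ)) → T x = x := by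
    intro V hV x hx
    obtain ⟨ℓ, hℓ, -⟩ := ultrafilter_bdd_limit (fun k => ‖w k - x‖^2) ((Rw + ‖x‖)^2)
      (fun k => by
        show |‖w k - x‖^2| ≤ (Rw + ‖x‖)^2
        rw [abs_of_nonneg (sq_nonneg _)]
        have h1 : ‖w k - x‖ ≤ Rw + ‖x‖ := (norm_sub_le _ _).trans (by linarith [hbw k])
        nlinarith [norm_nonneg (w k - x)]) V
    have hℓ0 : 0 ≤ ℓ := ge_of_tendsto hℓ (Eventually.of_forall fun k => sq_nonneg _)
    have hmid : Tendsto (fun k => ⟪w k - x, x - T x⟫_ℝ) (V : Filter ℕ) (𝓝 0) := by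
      have h1 := (hx (x - T x)).sub (tendsto_const_nhds (x := ⟪x, x - T x⟫_ℝ))
      simp only [sub_self] at h1
      convert h1 using 2 with k
      rw [inner_sub_left]
    have hlhs : Tendsto (fun k => ‖w k - T x‖^2) (V : Filter ℕ) (𝓝 (ℓ + ‖x - T x‖^2)) := by
      have hexp : ∀ k, ‖w k - T x‖^2
          = ‖w k - x‖^2 + 2 * ⟪w k - x, x - T x⟫_ℝ + ‖x - T x‖^2 := by
        intro k
        have : w k - T x = (w k - x) + (x - T x) := by abel
        rw [this, norm_add_sq_real]
      simp only [hexp]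
      have h7 := (hℓ.add (hmid.const_mul 2)).add
        (tendsto_const_nhds (x := ‖x - T x‖^2))
      have h8 : ℓ + 2 * 0 + ‖x - T x‖^2 = ℓ + ‖x - T x‖^2 := by ring
      rwa [h8] at h7
    have hub : ∀ k, ‖w k - T x‖^2 ≤ (‖e k‖ + ‖w k - x‖)^2 := by
      intro k
      have h1 : ‖w k - T x‖ ≤ ‖e k‖ + ‖w k - x‖ := by
        calc ‖w k - T x‖ = ‖(w k - T (w k)) + (T (w k) - T x)‖ := by abel_nf
          _ ≤ ‖w k - T (w k)‖ + ‖T (w k) - T x‖ := norm_add_le _ _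
          _ ≤ ‖e k‖ + ‖w k - x‖ := by
              have h2 : ‖w k - T (w k)‖ = ‖e k‖ := by rw [he]; exact norm_sub_rev _ _
              have h3 := hnon (w k) x
              linarith
      nlinarith [norm_nonneg (w k - T x), norm_nonneg (e k), norm_nonneg (w k - x)]
    have hrhs : Tendsto (fun k => (‖e k‖ + ‖w k - x‖)^2) (V : Filter ℕ) (𝓝 ℓ) := by
      have h1 : Tendsto (fun k => ‖w k - x‖) (V : Filter ℕ) (𝓝 (Real.sqrt ℓ)) := by
        have h2 := hℓ.sqrt
        have hfun : (fun k => Real.sqrt (‖w k - x‖^2)) = fun k => ‖w k - x‖ :=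
          funext fun k => Real.sqrt_sq (norm_nonneg _)
        rwa [hfun] at h2
      have h3 := ((he0.mono_left hV).add h1).pow 2
      simpa [Real.sq_sqrt hℓ0] using h3
    have hle : ℓ + ‖x - T x‖^2 ≤ ℓ :=
      le_of_tendsto_of_tendsto' hlhs hrhs hub
    have h4 : ‖x - T x‖ = 0 := by nlinarith [norm_nonneg (x - T x)]
    have h5 := norm_eq_zero.mp h4
    rw [sub_eq_zero] at h5
    exact h5.symm
  -- uniqueness of fixed weak cluster points
  have huniq : ∀ (x x' : D), T x = x → T x' = x' →
      (∃ V : Ultrafilter ℕ, (V : Filter ℕ) ≤ atTop ∧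
        ∀ h, Tendsto (fun k => ⟪w k, h⟫_ℝ) (V : Filter ℕ) (𝓝 ⟪x, h⟫_ℝ)) →
      (∃ V' : Ultrafilter ℕ, (V' : Filter ℕ) ≤ atTop ∧
        ∀ h, Tendsto (fun k => ⟪w k, h⟫_ℝ) (V' : Filter ℕ) (𝓝 ⟪x', h⟫_ℝ)) → x = x' := by
    rintro x x' hxf hx'f ⟨V, hV, hx⟩ ⟨V', hV', hx'⟩
    obtain ⟨L, hL⟩ := hLz x hxf
    obtain ⟨L', hL'⟩ := hLz x' hx'f
    have hid : ∀ k, ⟪w k, x - x'⟫_ℝ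
        = (‖w k - x'‖^2 - ‖w k - x‖^2 - ‖x'‖^2 + ‖x‖^2) / 2 := by
      intro k
      have h1 : ‖w k - x'‖^2 = ‖w k‖^2 - 2*⟪w k, x'⟫_ℝ + ‖x'‖^2 := norm_sub_sq_real _ _
      have h2 : ‖w k - x‖^2 = ‖w k‖^2 - 2*⟪w k, x⟫_ℝ + ‖x‖^2 := norm_sub_sq_real _ _
      rw [inner_sub_right, h1, h2]
      ring
    have hconv : Tendsto (fun k => ⟪w k, x - x'⟫_ℝ) atTop
        (𝓝 ((L' - L - ‖x'‖^2 + ‖x‖^2) / 2)) := by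
      simp only [hid]
      exact ((((hL'.sub hL).sub tendsto_const_nhds).add tendsto_const_nhds).div_const 2)
    have e1 : ⟪x, x - x'⟫_ℝ = (L' - L - ‖x'‖^2 + ‖x‖^2) / 2 :=
      tendsto_nhds_unique (hx (x - x')) (hconv.mono_left hV)
    have e2 : ⟪x', x - x'⟫_ℝ = (L' - L - ‖x'‖^2 + ‖x‖^2) / 2 :=
      tendsto_nhds_unique (hx' (x - x')) (hconv.mono_left hV')
    have h6 : ⟪x - x', x - x'⟫_ℝ = 0 := by
      rw [inner_sub_left]; linarith
    rw [sub_eq_zero.mp (inner_self_eq_zero.mp h6)]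
  -- the weak limit wstar
  obtain ⟨V₀, hV₀⟩ := Ultrafilter.exists_le (atTop : Filter ℕ)
  obtain ⟨wstar, hwstar⟩ := ultrafilter_weak_limit w Rw hbw V₀
  have hfixw : T wstar = wstar := hclusterfix V₀ hV₀ wstar hwstar
  have hweak : WeakLim w wstar := by
    intro h
    rw [tendsto_iff_ultrafilter]
    intro V hV
    obtain ⟨x, hx⟩ := ultrafilter_weak_limit w Rw hbw V
    have hxf : T x = x := hclusterfix V hV x hx
    have hxw : x = wstar := huniq x wstar hxf hfixw ⟨V, hV, hx⟩ ⟨V₀, hV₀, hwstar⟩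
    subst hxw
    exact hx h
  -- ustar
  set ustar : H := y wstar with hustar
  have hzero_eq : C wstar - M ustar = 0 := by
    rw [hM]
    have h1 : ContinuousLinearMap.adjoint C ustar = T wstar := rfl
    rw [h1, hfixw, sub_self]
  have hmemA : C wstar - M ustar ∈ A ustar := hy wstar
  have hzeroA : (0 : H) ∈ A ustar := hzero_eq ▸ hmemA
  have hwstar_eq : ContinuousLinearMap.adjoint C ustar = wstar := hfixw
  refine ⟨wstar, ustar, hweak, hmemA, hzeroA, ?_⟩
  -- Lipschitz part
  rintro ⟨K, hK⟩
  -- boundedness of y (w k)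
  have hyb : ∀ k, ‖y (w k) - ustar‖ ≤ K * ‖C (w k) - M ustar‖ := by
    intro k
    exact hK (C (w k)) (M ustar) (y (w k)) ustar (hy (w k))
      (by rw [sub_self]; exact hzeroA)
  set R' : ℝ := |K| * (‖C‖ * Rw + ‖M ustar‖) + ‖ustar‖ with hR'
  have hbound : ∀ k, ‖C (w k) - M ustar‖ ≤ ‖C‖ * Rw + ‖M ustar‖ := by
    intro k
    calc ‖C (w k) - M ustar‖ ≤ ‖C (w k)‖ + ‖M ustar‖ := norm_sub_le _ _
      _ ≤ ‖C‖ * ‖w k‖ + ‖M ustar‖ := by gcongr; exact C.le_opNorm _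
      _ ≤ ‖C‖ * Rw + ‖M ustar‖ := by
          have := hbw k
          have := norm_nonneg C
          nlinarith
  have hby : ∀ k, ‖y (w k)‖ ≤ R' := by
    intro k
    have h1 : ‖y (w k) - ustar‖ ≤ |K| * (‖C‖ * Rw + ‖M ustar‖) := by
      calc ‖y (w k) - ustar‖ ≤ K * ‖C (w k) - M ustar‖ := hyb k
        _ ≤ |K| * ‖C (w k) - M ustar‖ :=
            mul_le_mul_of_nonneg_right (le_abs_self K) (norm_nonneg _)
        _ ≤ |K| * (‖C‖ * Rw + ‖M ustar‖) :=
            mul_le_mul_of_nonneg_left (hbound k) (abs_nonneg K)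
    calc ‖y (w k)‖ = ‖(y (w k) - ustar) + ustar‖ := by rw [sub_add_cancel]
      _ ≤ ‖y (w k) - ustar‖ + ‖ustar‖ := norm_add_le _ _
      _ ≤ R' := by rw [hR']; linarith
  -- strong convergence of the residuals
  have hvk_eq : ∀ k, C (w k) - M (y (w k)) = - C (e k) := by
    intro k
    rw [hM]
    have h1 : ContinuousLinearMap.adjoint C (y (w k)) = T (w k) := rfl
    rw [h1]
    have h2 : e k = T (w k) - w k := rfl
    rw [h2, map_sub]
    abel
  have hvk0 : Tendsto (fun k => C (w k) - M (y (w k))) atTop (𝓝 0) := by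
    have hb1 : ∀ k, ‖C (w k) - M (y (w k))‖ ≤ ‖C‖ * ‖e k‖ := by
      intro k
      rw [hvk_eq k, norm_neg]
      exact C.le_opNorm _
    have hb2 : Tendsto (fun k => ‖C‖ * ‖e k‖) atTop (𝓝 0) := by
      simpa using he0.const_mul ‖C‖
    exact squeeze_zero_norm hb1 hb2
  -- weak convergence of y (w k) to ustar
  intro h
  rw [tendsto_iff_ultrafilter]
  intro V hV
  obtain ⟨u', hu'⟩ := ultrafilter_weak_limit (fun k => y (w k)) R' hby V
  -- (a) 0 ∈ A u'
  have hzeroA' : (0 : H) ∈ A u' := by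
    apply hA.2
    intro z v hv
    have hmono2 : ∀ k, 0 ≤ ⟪(C (w k) - M (y (w k))) - v, y (w k) - z⟫_ℝ :=
      fun k => hA.1 (y (w k)) z _ _ (hy (w k)) hv
    have hlim : Tendsto (fun k => ⟪(C (w k) - M (y (w k))) - v, y (w k) - z⟫_ℝ)
        (V : Filter ℕ) (𝓝 ⟪(0 : H) - v, u' - z⟫_ℝ) := by
      have hexp : ∀ k, ⟪(C (w k) - M (y (w k))) - v, y (w k) - z⟫_ℝ
          = ⟪C (w k) - M (y (w k)), y (w k) - z⟫_ℝ - (⟪y (w k), v⟫_ℝ - ⟪z, v⟫_ℝ) := by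
        intro k
        rw [inner_sub_left, inner_sub_right, inner_sub_right, real_inner_comm v (y (w k)),
          real_inner_comm v z]
        all_goals ring
      simp only [hexp]
      have hgoal : ⟪(0 : H) - v, u' - z⟫_ℝ = 0 - (⟪u', v⟫_ℝ - ⟪z, v⟫_ℝ) := by
        rw [inner_sub_left, inner_sub_right, inner_sub_right, real_inner_comm v u',
          real_inner_comm v z]
        simp
      rw [hgoal]
      apply Tendsto.sub
      · -- first term → 0
        have hb1 : ∀ k, ‖⟪C (w k) - M (y (w k)), y (w k) - z⟫_ℝ‖
            ≤ ‖C (w k) - M (y (w k))‖ * (R' + ‖z‖) := by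
          intro k
          calc ‖⟪C (w k) - M (y (w k)), y (w k) - z⟫_ℝ‖
              ≤ ‖C (w k) - M (y (w k))‖ * ‖y (w k) - z‖ := by
                rw [Real.norm_eq_abs]; exact abs_real_inner_le_norm _ _
            _ ≤ ‖C (w k) - M (y (w k))‖ * (R' + ‖z‖) := by
                gcongr
                exact (norm_sub_le _ _).trans (by linarith [hby k])
        have hb2 : Tendsto (fun k => ‖C (w k) - M (y (w k))‖ * (R' + ‖z‖))
            (V : Filter ℕ) (𝓝 0) := by
          have := (hvk0.mono_left hV).norm.mul_const (R' + ‖z‖)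
          simpa using this
        exact squeeze_zero_norm hb1 hb2
      · exact (hu' v).sub tendsto_const_nhds
    exact ge_of_tendsto hlim (Eventually.of_forall hmono2)
  -- (b) M u' = M ustar
  have hMeq : M u' = M ustar := by
    have hadj : ContinuousLinearMap.adjoint C u' = ContinuousLinearMap.adjoint C ustar := by
      apply ext_inner_right ℝ
      intro d
      rw [ContinuousLinearMap.adjoint_inner_left, ContinuousLinearMap.adjoint_inner_left]
      have h1 : Tendsto (fun k => ⟪y (w k), C d⟫_ℝ) (V : Filter ℕ) (𝓝 ⟪u', C d⟫_ℝ) :=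
        hu' (C d)
      have h2 : Tendsto (fun k => ⟪y (w k), C d⟫_ℝ) atTop (𝓝 ⟪wstar, d⟫_ℝ) := by
        have hid2 : ∀ k, ⟪y (w k), C d⟫_ℝ = ⟪w k, d⟫_ℝ + ⟪e k, d⟫_ℝ := by
          intro k
          rw [← ContinuousLinearMap.adjoint_inner_left]
          have h3 : ContinuousLinearMap.adjoint C (y (w k)) = w k + e k := by
            have : e k = T (w k) - w k := rfl
            rw [this]
            show T (w k) = w k + (T (w k) - w k)
            abel
          rw [h3, inner_add_left]
        simp only [hid2]
        have h4 : Tendsto (fun k => ⟪e k, d⟫_ℝ) atTop (𝓝 0) := by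
          have hb1 : ∀ k, ‖⟪e k, d⟫_ℝ‖ ≤ ‖e k‖ * ‖d‖ := by
            intro k
            rw [Real.norm_eq_abs]; exact abs_real_inner_le_norm _ _
          have hb2 : Tendsto (fun k => ‖e k‖ * ‖d‖) atTop (𝓝 0) := by
            simpa using he0.mul_const ‖d‖
          exact squeeze_zero_norm hb1 hb2
        simpa using (hweak d).add h4
      have h5 : ⟪u', C d⟫_ℝ = ⟪wstar, d⟫_ℝ := tendsto_nhds_unique h1 (h2.mono_left hV)
      rw [h5, ← hwstar_eq, ContinuousLinearMap.adjoint_inner_left]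
    rw [hM, hM, hadj]
  -- (c) u' = ustar
  have hfinal : u' = ustar := by
    have h1 : ‖u' - ustar‖ ≤ K * ‖M u' - M ustar‖ :=
      hK (M u') (M ustar) u' ustar (by rw [sub_self]; exact hzeroA')
        (by rw [sub_self]; exact hzeroA)
    rw [hMeq, sub_self, norm_zero, mul_zero] at h1
    have h2 : ‖u' - ustar‖ = 0 := le_antisymm h1 (norm_nonneg _)
    exact sub_eq_zero.mp (norm_eq_zero.mp h2)
  rw [← hfinal]
  exact hu' h
end

section
/- Let N > 1 and let G be a connected simple undirected graph on the vertex set {1,…,N}. Then there exist vectors z_1, …, z_N ∈ ℝ^{N−1} such that: (a) for all i ≠ j, z_i · z_j ≠ 0 if and only if i and j are adjacent in G; (b) z_1 + ⋯ + z_N = 0; (c) span{z_1, …, z_N} = ℝ^{N−1}. -/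
open scoped InnerProductSpace
open Matrix
open scoped MatrixOrder

/-- For every connected simple graph `G` on `{1,…,N}` (`N > 1`) there exist
vectors `z_1, …, z_N ∈ ℝ^{N−1}` such that: (a) for `i ≠ j`, `z_i · z_j ≠ 0` iff `i` and `j` are
adjacent in `G`; (b) `z_1 + ⋯ + z_N = 0`; (c) `span{z_1, …, z_N} = ℝ^{N−1}`. -/
theorem faithful_orthogonal_representation_summing_to_zero
    (N : ℕ) (hN : 1 < N) (G : SimpleGraph (Fin N)) (hG : G.Connected) :
    ∃ z : Fin N → EuclideanSpace ℝ (Fin (N - 1)),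
      (∀ i j : Fin N, i ≠ j → (⟪z i, z j⟫_ℝ ≠ 0 ↔ G.Adj i j)) ∧
      (∑ i, z i = 0) ∧
      Submodule.span ℝ (Set.range z) = ⊤ := by
  classical
  set L : Matrix (Fin N) (Fin N) ℝ := G.lapMatrix ℝ with hL
  have hLps : L.PosSemidef := SimpleGraph.posSemidef_lapMatrix ℝ G
  set B : Matrix (Fin N) (Fin N) ℝ := CFC.sqrt L with hB
  have hBB : B * B = L := CFC.sqrt_mul_sqrt_self L hLps.nonneg
  have hBsymm : Bᵀ = B := by
    have := (CFC.sqrt_nonneg L).posSemidef.isHermitian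
    simpa [Matrix.IsHermitian, Matrix.conjTranspose_eq_transpose_of_trivial] using this
  have hB1 : B *ᵥ (fun _ => (1:ℝ)) = 0 := by
    set v : Fin N → ℝ := B *ᵥ (fun _ => (1:ℝ)) with hv
    have hdot : v ⬝ᵥ v = 0 := by
      have h1 : v ⬝ᵥ v = (L *ᵥ (fun _ => (1:ℝ))) ⬝ᵥ (fun _ => (1:ℝ)) := by
        rw [hv, Matrix.dotProduct_mulVec, ← Matrix.mulVec_transpose, hBsymm,
          Matrix.mulVec_mulVec, hBB]
      rw [h1, SimpleGraph.lapMatrix_mulVec_const_eq_zero, zero_dotProduct]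
    funext k
    have h2 : ∀ k ∈ Finset.univ, (0:ℝ) ≤ v k * v k := fun k _ => mul_self_nonneg _
    have := (Finset.sum_eq_zero_iff_of_nonneg h2).mp hdot k (Finset.mem_univ k)
    exact mul_self_eq_zero.mp this
  -- the column vectors of `B`
  set b : Fin N → EuclideanSpace ℝ (Fin N) := fun i => WithLp.toLp 2 (fun k => B k i) with hbdef
  have hinner : ∀ i j, ⟪b i, b j⟫_ℝ = L i j := by
    intro i j
    rw [PiLp.inner_apply]
    simp only [RCLike.inner_apply, starRingEnd_apply, star_trivial]
    have hsymm' : ∀ a c, B a c = B c a := by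
      intro a c; exact (congrFun (congrFun hBsymm a) c).symm.trans (Matrix.transpose_apply B a c)
    rw [show (∑ k, (b j) k * (b i) k) = ∑ k, b i k * b j k from
      Finset.sum_congr rfl fun k _ => mul_comm _ _]
    calc (∑ k, b i k * b j k) = ∑ k, B i k * B k j := by
          refine Finset.sum_congr rfl fun k _ => ?_
          show B k i * B k j = B i k * B k j
          rw [hsymm' k i]
      _ = (B * B) i j := (Matrix.mul_apply).symm
      _ = L i j := by rw [hBB]
  have hsum : ∑ i, b i = 0 := by
    ext k
    have h1 : (∑ i, b i) k = ∑ i, b i k := by rw [WithLp.ofLp_sum, Finset.sum_apply]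
    rw [h1]
    have h2 := congrFun hB1 k
    simp only [Matrix.mulVec, dotProduct, mul_one, Pi.zero_apply] at h2
    show (∑ i, B k i) = (0 : EuclideanSpace ℝ (Fin N)) k
    rw [h2]; rfl
  -- the span of the columns has dimension `N - 1`
  set W : Submodule ℝ (EuclideanSpace ℝ (Fin N)) := Submodule.span ℝ (Set.range b) with hW
  set T : EuclideanSpace ℝ (Fin N) →ₗ[ℝ] EuclideanSpace ℝ (Fin N) :=
    { toFun := fun x => WithLp.toLp 2 (B *ᵥ x)
      map_add' := fun x y => congrArg (WithLp.toLp 2) (Matrix.mulVec_add B x y)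
      map_smul' := fun c x => congrArg (WithLp.toLp 2) (Matrix.mulVec_smul B c x) } with hT
  have hTapp : ∀ x : EuclideanSpace ℝ (Fin N), T x = B *ᵥ x := fun _ => rfl
  set one : EuclideanSpace ℝ (Fin N) := WithLp.toLp 2 (fun _ => (1:ℝ)) with hone
  have hker : LinearMap.ker T = Submodule.span ℝ {one} := by
    apply le_antisymm
    · intro x hx
      have hx0 : B *ᵥ x = 0 := congrArg WithLp.ofLp hx
      have hLx : Matrix.toLin' (G.lapMatrix ℝ) x = 0 := by
        rw [Matrix.toLin'_apply, ← hL, ← hBB, ← Matrix.mulVec_mulVec, hx0, Matrix.mulVec_zero]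
      have hconst := (SimpleGraph.lapMatrix_mulVec_eq_zero_iff_forall_reachable (G := G)).mp
        (by rwa [Matrix.toLin'_apply] at hLx)
      rw [Submodule.mem_span_singleton]
      refine ⟨x ⟨0, by omega⟩, ?_⟩
      ext k
      show x ⟨0, by omega⟩ * 1 = x k
      rw [mul_one]
      exact hconst _ k (hG.preconnected _ k)
    · rw [Submodule.span_le, Set.singleton_subset_iff]
      exact congrArg (WithLp.toLp 2) hB1
  have hone_ne : one ≠ 0 := by
    intro h
    have h0 := congrArg (fun v : EuclideanSpace ℝ (Fin N) => v ⟨0, by omega⟩) h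
    exact one_ne_zero (α := ℝ) h0
  have hkerdim : Module.finrank ℝ (LinearMap.ker T) = 1 := by
    rw [hker]; exact finrank_span_singleton hone_ne
  have hrange : LinearMap.range T = W := by
    apply le_antisymm
    · rintro _ ⟨x, rfl⟩
      have hTx : T x = ∑ i, x i • b i := by
        ext k
        rw [hTapp]
        show (B *ᵥ x) k = (∑ i, x i • b i) k
        rw [WithLp.ofLp_sum, Finset.sum_apply]
        calc (B *ᵥ x) k = ∑ i, B k i * x i := rfl
          _ = ∑ i, (x i • b i) k := Finset.sum_congr rfl fun i _ => mul_comm (B k i) (x i)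
      rw [hTx]
      exact Submodule.sum_mem _ fun i _ =>
        Submodule.smul_mem _ _ (Submodule.subset_span ⟨i, rfl⟩)
    · rw [hW, Submodule.span_le]
      rintro _ ⟨i, rfl⟩
      refine ⟨WithLp.toLp 2 (Pi.single i 1 : Fin N → ℝ), ?_⟩
      ext k
      rw [hTapp, Matrix.mulVec_single]
      show B k i * 1 = b i k
      rw [mul_one, hbdef]
  have hrn := LinearMap.finrank_range_add_finrank_ker T
  rw [hrange, hkerdim, finrank_euclideanSpace_fin] at hrn
  have hdim : Module.finrank ℝ ↥W = N - 1 := by omega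
  -- the isometry onto `ℝ^{N-1}`
  set e : ↥W ≃ₗᵢ[ℝ] EuclideanSpace ℝ (Fin (N - 1)) :=
    (stdOrthonormalBasis ℝ ↥W).repr.trans
      (LinearIsometryEquiv.piLpCongrLeft 2 ℝ ℝ (finCongr hdim)) with he
  set zz : Fin N → ↥W := fun i => ⟨b i, Submodule.subset_span ⟨i, rfl⟩⟩ with hzz
  refine ⟨fun i => e (zz i), ?_, ?_, ?_⟩
  · intro i j hij
    have h1 : ⟪e (zz i), e (zz j)⟫_ℝ = ⟪zz i, zz j⟫_ℝ := e.inner_map_map _ _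
    have h2 : ⟪zz i, zz j⟫_ℝ = ⟪b i, b j⟫_ℝ := rfl
    rw [h1, h2, hinner i j]
    have hLij : L i j = -(if G.Adj i j then (1:ℝ) else 0) := by
      rw [hL]
      simp [SimpleGraph.lapMatrix, SimpleGraph.degMatrix, SimpleGraph.adjMatrix, hij]
    rw [hLij]
    by_cases hadj : G.Adj i j <;> simp [hadj]
  · rw [← map_sum]
    have hz0 : ∑ i, zz i = 0 := by
      apply Subtype.ext
      rw [Submodule.coe_sum]
      simpa [hzz] using hsum
    rw [hz0, map_zero]
  · have h1 : Set.range (fun i => e (zz i)) = ⇑e.toLinearEquiv.toLinearMap '' Set.range zz := by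
      rw [← Set.range_comp]; rfl
    rw [h1, ← Submodule.map_span e.toLinearEquiv.toLinearMap]
    have h2 : Submodule.span ℝ (Set.range zz) = ⊤ := by
      apply Submodule.map_injective_of_injective W.injective_subtype
      rw [Submodule.map_span, Submodule.map_top, Submodule.range_subtype]
      have h3 : W.subtype '' Set.range zz = Set.range b := by
        rw [← Set.range_comp]; rfl
      rw [h3]
    rw [h2, Submodule.map_top, LinearEquiv.range]
end

section
/- Let biG = (𝒩, ℰ, ℰ′) be a bilevel graph on 𝒩 = {1,…,N} with N ≥ 2, let A_1, …, A_N be maximal monotone operators on a real Hilbert space H with zer(A_1 + ⋯ + A_N) ≠ ∅, and let 𝒜 be the set-valued operator on H^N × H^{N−1} defined by (y, z) ∈ 𝒜(x, v) iff z = (Zᵀ⊗I)x and y ∈ A_1x_1 × ⋯ × A_Nx_N + ((Σ+P)⊗I)x − (Z⊗I)v. Then for (x_1, …, x_N) ∈ H^N there exists v ∈ H^{N−1} such that (0,0) ∈ 𝒜((x_1,…,x_N), v) if and only if x_1 = ⋯ = x_N and the common point x := x_1 satisfies 0 ∈ (A_1 + ⋯ + A_N)x. -/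
open scoped InnerProductSpace Topology
open Filter

noncomputable section

/-- The simple (undirected) graph induced by a set of directed edges on `Fin N`. -/
def graphOf {N : ℕ} (E : Finset (Fin N × Fin N)) : SimpleGraph (Fin N) where
  Adj i j := i ≠ j ∧ ((i, j) ∈ E ∨ (j, i) ∈ E)
  symm := ⟨fun i j h => ⟨h.1.symm, h.2.symm⟩⟩
  loopless := ⟨fun i h => h.1 rfl⟩

/-- Degree of node `i` in the undirected graph induced by `E`: number of adjacent nodes. -/
def degE {N : ℕ} (E : Finset (Fin N × Fin N)) (i : Fin N) : ℕ :=
  (Finset.univ.filter (fun j => j ≠ i ∧ ((i, j) ∈ E ∨ (j, i) ∈ E))).card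

/-- The graph Laplacian of the graph induced by `E`. -/
def lapE {N : ℕ} (E : Finset (Fin N × Fin N)) : Matrix (Fin N) (Fin N) ℝ :=
  fun i j =>
    if i = j then (degE E i : ℝ)
    else if (i, j) ∈ E ∨ (j, i) ∈ E then -1 else 0

/-- The skew-symmetric matrix `Σ` built from the Laplacian of the base graph. -/
def sigmaE {N : ℕ} (E' : Finset (Fin N × Fin N)) : Matrix (Fin N) (Fin N) ℝ :=
  fun i j => if i < j then -(lapE E' i j) else if j < i then lapE E' i j else 0

/-- The matrix `P^{ij}`. -/
def pijM (N : ℕ) (i j : Fin N) : Matrix (Fin N) (Fin N) ℝ :=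
  fun h k =>
    if h = i ∧ k = i then 1
    else if h = j ∧ k = j then 1
    else if h = j ∧ k = i then -2 else 0

/-- The matrix `P = ∑_{(i,j) ∈ ℰ∖ℰ′} P^{ij}`. -/
def pE {N : ℕ} (E E' : Finset (Fin N × Fin N)) : Matrix (Fin N) (Fin N) ℝ :=
  ∑ e ∈ E \ E', pijM N e.1 e.2

/-- The block operator `Q ⊗ I : H^M → H^N` induced by a matrix `Q ∈ ℝ^{N×M}`. -/
def matVecH {H : Type*} [NormedAddCommGroup H] [InnerProductSpace ℝ H] {N M : ℕ}
    (Q : Matrix (Fin N) (Fin M) ℝ) (x : Fin M → H) : Fin N → H :=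
  fun h => ∑ k, Q h k • x k

/-- `(E, E')` forms a bilevel graph: the state graph `(𝒩, E)` is connected with a topological
ordering, and the base graph `(𝒩, E')` is a connected subgraph. -/
structure IsBilevel {N : ℕ} (E E' : Finset (Fin N × Fin N)) : Prop where
  base_subset : E' ⊆ E
  topo : ∀ e ∈ E, e.1 < e.2
  state_conn : (graphOf E).Connected
  base_conn : (graphOf E').Connected

/-- `Z` gives an onto decomposition of the Laplacian of the base graph `E'`:
`L = Z Zᵀ` and `ker Zᵀ = span{(1,…,1)}`. -/
def ZOnto {N : ℕ} (E' : Finset (Fin N × Fin N)) (Z : Matrix (Fin N) (Fin (N - 1)) ℝ) : Prop :=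
  Z * Z.transpose = lapE E' ∧
  ∀ v : Fin N → ℝ, Z.transpose.mulVec v = 0 ↔ ∃ c : ℝ, v = fun _ => c

/-- The graph-based Douglas–Rachford iteration: `a_i^{k+1} ∈ A_i x_i^{k+1}`,
`(L⊗I)x^{k+1} + ((Σ+P)⊗I)x^{k+1} + σ a^{k+1} = (Z⊗I)w^k` and
`w^{k+1} = w^k − θ_k (Zᵀ⊗I)x^{k+1}`. -/
structure IsGDR {H : Type*} [NormedAddCommGroup H] [InnerProductSpace ℝ H] {N : ℕ}
    (E E' : Finset (Fin N × Fin N)) (Z : Matrix (Fin N) (Fin (N - 1)) ℝ)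
    (A : Fin N → H → Set H) (σ : ℝ) (θ : ℕ → ℝ)
    (x : ℕ → Fin N → H) (a : ℕ → Fin N → H) (w : ℕ → Fin (N - 1) → H) : Prop where
  mem : ∀ k i, a (k + 1) i ∈ A i (x (k + 1) i)
  res : ∀ k, matVecH (lapE E' + sigmaE E' + pE E E') (x (k + 1)) + σ • a (k + 1)
          = matVecH Z (w k)
  upd : ∀ k, w (k + 1) = w k - θ k • matVecH Z.transpose (x (k + 1))

/-- `zer (A_1 + ⋯ + A_N) ≠ ∅`. -/
def SumZerNonempty {H : Type*} [NormedAddCommGroup H] [InnerProductSpace ℝ H] {N : ℕ}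
    (A : Fin N → H → Set H) : Prop :=
  ∃ (xs : H) (b : Fin N → H), (∀ i, b i ∈ A i xs) ∧ ∑ i, b i = 0

/-- The state variance `Var(x) = (1/N) ∑_i ‖x_i − x̄‖²`. -/
def stateVar {H : Type*} [NormedAddCommGroup H] [InnerProductSpace ℝ H] {N : ℕ}
    (x : Fin N → H) : ℝ :=
  (N : ℝ)⁻¹ * ∑ i, ‖x i - (N : ℝ)⁻¹ • ∑ j, x j‖ ^ 2

/-- In-degree `d_i⁺ = #{h : (h,i) ∈ E}` of node `i`. -/
def inDeg {N : ℕ} (E : Finset (Fin N × Fin N)) (i : Fin N) : ℕ :=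
  (Finset.univ.filter (fun h => (h, i) ∈ E)).card

/-- Out-degree `d_i⁻ = #{h : (i,h) ∈ E}` of node `i`. -/
def outDeg {N : ℕ} (E : Finset (Fin N × Fin N)) (i : Fin N) : ℕ :=
  (Finset.univ.filter (fun h => (i, h) ∈ E)).card

/-- The unbalance `U_G = sqrt((1/N) ∑_i (d_i⁻ − d_i⁺)²)` of the state graph. -/
def unbalance {N : ℕ} (E : Finset (Fin N × Fin N)) : ℝ :=
  Real.sqrt ((N : ℝ)⁻¹ * ∑ i, ((outDeg E i : ℝ) - (inDeg E i : ℝ)) ^ 2)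

end

noncomputable section

/-- The inner product on the product space `H^N × H^M`. -/
def innProd {H : Type*} [NormedAddCommGroup H] [InnerProductSpace ℝ H] {N M : ℕ}
    (p q : (Fin N → H) × (Fin M → H)) : ℝ :=
  (∑ i, ⟪p.1 i, q.1 i⟫_ℝ) + ∑ j, ⟪p.2 j, q.2 j⟫_ℝ

/-- Maximal monotonicity of a set-valued operator with respect to an explicitly given
inner product `inn`. -/
def IsMaxMonoWith {K : Type*} [AddCommGroup K] (inn : K → K → ℝ) (A : K → Set K) : Prop :=
  (∀ x y u v : K, u ∈ A x → v ∈ A y → 0 ≤ inn (u - v) (x - y)) ∧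
  (∀ x u : K, (∀ y v : K, v ∈ A y → 0 ≤ inn (u - v) (x - y)) → u ∈ A x)

/-- The set-valued operator `𝒜` on `H^N × H^{N−1}`:
`(y, z) ∈ 𝒜(x, v)` iff `z = (Zᵀ⊗I)x` and
`y ∈ A_1x_1 × ⋯ × A_Nx_N + ((Σ+P)⊗I)x − (Z⊗I)v`. -/
def opA {H : Type*} [NormedAddCommGroup H] [InnerProductSpace ℝ H] {N : ℕ}
    (A : Fin N → H → Set H) (E E' : Finset (Fin N × Fin N))
    (Z : Matrix (Fin N) (Fin (N - 1)) ℝ) :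
    (Fin N → H) × (Fin (N - 1) → H) → Set ((Fin N → H) × (Fin (N - 1) → H)) :=
  fun p =>
    { q | q.2 = matVecH Z.transpose p.1 ∧
      ∃ b : Fin N → H, (∀ i, b i ∈ A i (p.1 i)) ∧
        q.1 = b + matVecH (sigmaE E' + pE E E') p.1 - matVecH Z p.2 }

end


/-!
Testing `(Zᵀ⊗I)x = 0` against `⟪·, h⟫` reduces it to the scalar statement `ker Zᵀ = span 1`,
so `x` is a consensus vector. Since `1ᵀZ = 0`, `Σ` is skew and each `P^{ij}` has entries
`1, 1, -2`, summing the first block of `0 ∈ 𝒜(x, v)` over the nodes leaves `∑ bᵢ = 0`.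
Conversely, the range of `Z` is the annihilator of `ker Zᵀ`, i.e. the vectors with zero sum;
tensoring with `H`, the zero-sum vector `b + ((Σ+P)⊗I)x` is `(Z⊗I)v` for some `v`.
-/

open Matrix

theorem Matrix.exists_mulVec_eq_of_sum_eq_zero {K m n : Type*} [Field K] [Fintype m] [Fintype n]
    [DecidableEq m] (Z : Matrix m n K) (hker : ∀ w, Zᵀ *ᵥ w = 0 → ∃ a, w = fun _ => a)
    {c : m → K} (hc : ∑ i, c i = 0) : ∃ u, Z *ᵥ u = c := by
  by_contra hnot
  have hc' : c ∉ LinearMap.range Z.mulVecLin := by simpa using hnot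
  obtain ⟨f, hfc, hf⟩ := Submodule.exists_dual_map_eq_bot_of_notMem hc' inferInstance
  obtain ⟨w, rfl⟩ := (dotProductEquiv K m).surjective f
  have hw : Zᵀ *ᵥ w = 0 := by
    rw [mulVec_transpose]
    refine dotProduct_eq_zero _ fun u => ?_
    rw [← dotProduct_mulVec]
    simpa [hf] using Submodule.mem_map_of_mem (f := dotProductEquiv K m w)
      (LinearMap.mem_range_self Z.mulVecLin u)
  obtain ⟨a, rfl⟩ := hker w hw
  exact hfc (by simp [dotProduct, ← Finset.mul_sum, hc])

section MatVecH

variable {H : Type*} [NormedAddCommGroup H] [InnerProductSpace ℝ H] {N M : ℕ}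

lemma sum_matVecH (Q : Matrix (Fin N) (Fin M) ℝ) (x : Fin M → H) :
    ∑ i, matVecH Q x i = ∑ k, (∑ i, Q i k) • x k := by
  simp only [matVecH, Finset.sum_smul]
  exact Finset.sum_comm

lemma matVecH_const (Q : Matrix (Fin N) (Fin M) ℝ) (y : H) :
    matVecH Q (fun _ => y) = fun i => (∑ k, Q i k) • y :=
  funext fun _ => Finset.sum_smul.symm

lemma sum_matVecH_const (Q : Matrix (Fin N) (Fin M) ℝ) (y : H) :
    ∑ i, matVecH Q (fun _ => y) i = (∑ i, ∑ k, Q i k) • y := by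
  simp [matVecH_const, Finset.sum_smul]

lemma sum_matVecH_eq_zero {Q : Matrix (Fin N) (Fin M) ℝ} (hQ : ∀ k, ∑ i, Q i k = 0)
    (x : Fin M → H) : ∑ i, matVecH Q x i = 0 := by
  simp [sum_matVecH, hQ]

lemma inner_matVecH (Q : Matrix (Fin N) (Fin M) ℝ) (x : Fin M → H) (h : H) :
    (fun i => ⟪matVecH Q x i, h⟫_ℝ) = Q *ᵥ fun k => ⟪x k, h⟫_ℝ := by
  funext i
  simp [matVecH, mulVec, dotProduct, sum_inner, real_inner_smul_left]

lemma eq_of_matVecH_transpose_eq_zero {Z : Matrix (Fin N) (Fin M) ℝ}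
    (hker : ∀ w, Zᵀ *ᵥ w = 0 → ∃ a, w = fun _ => a) {x : Fin N → H}
    (hx : matVecH Zᵀ x = 0) (i j : Fin N) : x i = x j := by
  obtain ⟨a, ha⟩ := hker (fun k => ⟪x k, x i - x j⟫_ℝ) (by
    rw [← inner_matVecH, hx]
    exact funext fun _ => inner_zero_left _)
  have hij : ⟪x i - x j, x i - x j⟫_ℝ = 0 := by
    rw [inner_sub_left, congrFun ha i, congrFun ha j, sub_self]
  exact sub_eq_zero.1 (inner_self_eq_zero.1 hij)

lemma exists_matVecH_eq_of_sum_eq_zero (Z : Matrix (Fin N) (Fin M) ℝ)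
    (hker : ∀ w, Zᵀ *ᵥ w = 0 → ∃ a, w = fun _ => a) {c : Fin N → H} (hc : ∑ i, c i = 0) :
    ∃ v, matVecH Z v = c := by
  have hcol (i : Fin N) : ∑ h, (Pi.single i 1 - fun _ => (N : ℝ)⁻¹ : Fin N → ℝ) h = 0 := by
    have : (N : ℝ) ≠ 0 := Nat.cast_ne_zero.2 (Fin.pos i).ne'
    simp [Finset.sum_sub_distrib, this]
  choose u hu using fun i => Z.exists_mulVec_eq_of_sum_eq_zero hker (hcol i)
  refine ⟨fun k => ∑ i, u i k • c i, funext fun h => ?_⟩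
  calc matVecH Z (fun k => ∑ i, u i k • c i) h
      = ∑ i, (Z *ᵥ u i) h • c i := by
        simp only [matVecH, mulVec, dotProduct, Finset.smul_sum, Finset.sum_smul, smul_smul]
        exact Finset.sum_comm
    _ = c h := by
        simp [hu, Pi.single_apply, sub_smul, Finset.sum_sub_distrib, ← Finset.smul_sum, hc]

end MatVecH

lemma lapE_symm {N : ℕ} (E : Finset (Fin N × Fin N)) (i j : Fin N) :
    lapE E i j = lapE E j i := by
  by_cases h : i = j
  · subst h; rfl
  · simp [lapE, h, Ne.symm h, or_comm]

lemma sigmaE_apply_swap {N : ℕ} (E : Finset (Fin N × Fin N)) (i j : Fin N) :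
    sigmaE E i j = -sigmaE E j i := by
  rcases lt_trichotomy i j with h | rfl | h
  · simp [sigmaE, h, not_lt_of_gt h, lapE_symm E i j]
  · simp [sigmaE]
  · simp [sigmaE, h, not_lt_of_gt h, lapE_symm E i j]

lemma sum_sum_sigmaE {N : ℕ} (E : Finset (Fin N × Fin N)) :
    ∑ i, ∑ j, sigmaE E i j = 0 := by
  have h : ∑ i, ∑ j, sigmaE E i j = -∑ i, ∑ j, sigmaE E i j :=
    calc ∑ i, ∑ j, sigmaE E i j = ∑ i, ∑ j, -sigmaE E j i :=
          Finset.sum_congr rfl fun i _ => Finset.sum_congr rfl fun j _ => sigmaE_apply_swap E i j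
      _ = -∑ j, ∑ i, sigmaE E j i := by
        simp only [Finset.sum_neg_distrib, neg_inj]
        exact Finset.sum_comm
  linarith

lemma pijM_eq_single {N : ℕ} {i j : Fin N} (hij : i ≠ j) :
    pijM N i j = single i i 1 + single j j 1 + single j i (-2) := by
  ext h k
  simp only [pijM, Matrix.add_apply, single_apply]
  grind

lemma sum_sum_pijM {N : ℕ} {i j : Fin N} (hij : i ≠ j) :
    ∑ h, ∑ k, pijM N i j h k = 0 := by
  simp [pijM_eq_single hij, single_apply, Finset.sum_add_distrib, ite_and]
  norm_num

lemma sum_sum_pE {N : ℕ} {E E' : Finset (Fin N × Fin N)} (htopo : ∀ e ∈ E, e.1 < e.2) :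
    ∑ h, ∑ k, pE E E' h k = 0 := by
  calc ∑ h, ∑ k, pE E E' h k = ∑ e ∈ E \ E', ∑ h, ∑ k, pijM N e.1 e.2 h k := by
        simp only [pE, Matrix.sum_apply, Finset.sum_comm (t := E \ E')]
    _ = 0 := Finset.sum_eq_zero fun e he =>
        sum_sum_pijM (htopo e (Finset.mem_sdiff.1 he).1).ne

/-- **Theorem 3.3, zero characterization part.** `(0,0) ∈ 𝒜((x_1,…,x_N), v)` for
some `v ∈ H^{N−1}` if and only if `x_1 = ⋯ = x_N` and the common point solves
`0 ∈ (A_1 + ⋯ + A_N)x`. -/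
theorem opA_zeros
    {H : Type*} [NormedAddCommGroup H] [InnerProductSpace ℝ H]
    (N : ℕ) (hN : 2 ≤ N) (E E' : Finset (Fin N × Fin N)) (hbi : IsBilevel E E')
    (Z : Matrix (Fin N) (Fin (N - 1)) ℝ) (hZ : ZOnto E' Z)
    (A : Fin N → H → Set H) (x : Fin N → H) :
    (∃ v : Fin (N - 1) → H,
        ((0, 0) : (Fin N → H) × (Fin (N - 1) → H)) ∈ opA A E E' Z (x, v)) ↔
    ((∀ i j : Fin N, x i = x j) ∧
      ∃ b : Fin N → H, (∀ i, b i ∈ A i (x ⟨0, by omega⟩)) ∧ ∑ i, b i = 0) := by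
  set x₀ := x ⟨0, by omega⟩
  have hker : ∀ w, Zᵀ *ᵥ w = 0 → ∃ a, w = fun _ => a := fun w => (hZ.2 w).1
  have hZcol (k : Fin (N - 1)) : ∑ i, Z i k = 0 := by
    simpa [mulVec, dotProduct] using congrFun ((hZ.2 _).2 ⟨1, rfl⟩) k
  have hSP : ∑ i, matVecH (sigmaE E' + pE E E') (fun _ => x₀) i = 0 := by
    simp [sum_matVecH_const, Matrix.add_apply, Finset.sum_add_distrib, sum_sum_sigmaE,
      sum_sum_pE hbi.topo]
  have hconst (h : ∀ i j, x i = x j) : x = fun _ => x₀ := funext fun i => h _ _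
  simp only [opA, Set.mem_ofPred_eq]
  constructor
  · rintro ⟨v, hZx, b, hb, hzero⟩
    have hcons := eq_of_matVecH_transpose_eq_zero hker hZx.symm
    refine ⟨hcons, b, fun i => by simpa only [hconst hcons] using hb i, ?_⟩
    have hsum := congrArg (fun y => ∑ i, y i) hzero
    rw [hconst hcons] at hsum
    simpa [Finset.sum_add_distrib, Finset.sum_sub_distrib, hSP, sum_matVecH_eq_zero hZcol]
      using hsum.symm
  · rintro ⟨hcons, b, hb, hsum⟩
    rw [hconst hcons]
    obtain ⟨v, hv⟩ := exists_matVecH_eq_of_sum_eq_zero Z hker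
      (c := b + matVecH (sigmaE E' + pE E E') fun _ => x₀)
      (by simp [Finset.sum_add_distrib, hsum, hSP])
    refine ⟨v, ?_, b, hb, by rw [hv, sub_self]⟩
    funext k
    simp [matVecH_const, hZcol]
end

section
/- Let biG = (𝒩, ℰ, ℰ′) be a bilevel graph on 𝒩 = {1,…,N} with N ≥ 2, let A_1, …, A_N be maximal monotone operators on a real Hilbert space H with zer(A_1 + ⋯ + A_N) ≠ ∅, let σ > 0, θ_k ∈ (0,2] with Σ_k θ_k(2 − θ_k) = +∞, and let (x^k), (a^k), (w^k) be generated by the graph-based Douglas–Rachford iteration. Then for all k ≥ 1, ‖Σ_{i=1}^N a_i^k‖² ≤ (U_G² N² / σ²) Var(x^k). In particular, if x_1^k = ⋯ = x_N^k =: x* for some k ≥ 1, then x* solves 0 ∈ (A_1 + ⋯ + A_N)x*. -/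
open scoped InnerProductSpace Topology
open Filter

section AuxLemmas

variable {N : ℕ}

lemma colSum_lapE (E' : Finset (Fin N × Fin N)) (j : Fin N) :
    ∑ h, lapE E' h j = 0 := by
  classical
  have key : ∀ h : Fin N, lapE E' h j =
      (if h = j then (degE E' j : ℝ) else 0)
      - (if h ≠ j ∧ ((j, h) ∈ E' ∨ (h, j) ∈ E') then (1:ℝ) else 0) := by
    intro h
    by_cases hh : h = j
    · subst hh; simp [lapE]
    · simp only [lapE, if_neg hh]
      by_cases hc : (h, j) ∈ E' ∨ (j, h) ∈ E'
      · rw [if_pos hc, if_pos ⟨hh, hc.symm⟩]; ring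
      · rw [if_neg hc, if_neg (by tauto)]; ring
  rw [Finset.sum_congr rfl fun h _ => key h, Finset.sum_sub_distrib,
    Finset.sum_ite_eq' Finset.univ j, Finset.sum_boole]
  simp [degE]

lemma colSum_sigmaE (E' : Finset (Fin N × Fin N)) (htopo : ∀ e ∈ E', e.1 < e.2) (j : Fin N) :
    ∑ h, sigmaE E' h j = (inDeg E' j : ℝ) - outDeg E' j := by
  classical
  have key : ∀ h : Fin N, sigmaE E' h j =
      (if (h, j) ∈ E' then (1:ℝ) else 0) - (if (j, h) ∈ E' then (1:ℝ) else 0) := by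
    intro h
    rcases lt_trichotomy h j with hlt | heq | hgt
    · have hne : h ≠ j := ne_of_lt hlt
      have h2 : (j, h) ∉ E' := fun hm => absurd (htopo _ hm) (not_lt.2 hlt.le)
      simp only [sigmaE, if_pos hlt, lapE, if_neg hne]
      by_cases hc : (h, j) ∈ E' <;> simp [hc, h2]
    · subst heq
      have h2 : (h, h) ∉ E' := fun hm => lt_irrefl h (htopo _ hm)
      simp [sigmaE, h2]
    · have hne : h ≠ j := (ne_of_lt hgt).symm
      have h2 : (h, j) ∉ E' := fun hm => absurd (htopo _ hm) (not_lt.2 hgt.le)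
      simp only [sigmaE, if_neg (not_lt.2 hgt.le), if_pos hgt, lapE, if_neg hne]
      by_cases hc : (j, h) ∈ E' <;> simp [hc, h2]
  rw [Finset.sum_congr rfl fun h _ => key h, Finset.sum_sub_distrib,
    Finset.sum_boole, Finset.sum_boole]
  simp [inDeg, outDeg]

lemma colSum_pijM (i j m : Fin N) (hij : i ≠ j) :
    ∑ h, pijM N i j h m =
      (if m = j then (1:ℝ) else 0) - (if m = i then (1:ℝ) else 0) := by
  classical
  have key : ∀ h : Fin N, pijM N i j h m =
      (if h = i then (if m = i then (1:ℝ) else 0) else 0)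
      + (if h = j then ((if m = j then (1:ℝ) else 0) + (if m = i then (-2:ℝ) else 0)) else 0) := by
    intro h
    simp only [pijM]
    by_cases h1 : h = i <;> by_cases h2 : h = j <;> by_cases h3 : m = i <;>
      by_cases h4 : m = j <;> simp_all <;> norm_num
  rw [Finset.sum_congr rfl fun h _ => key h, Finset.sum_add_distrib,
    Finset.sum_ite_eq' Finset.univ i, Finset.sum_ite_eq' Finset.univ j]
  by_cases h3 : m = i <;> by_cases h4 : m = j <;> simp_all <;> norm_num

lemma sum_fiber_snd (S : Finset (Fin N × Fin N)) (m : Fin N) :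
    ∑ e ∈ S, (if m = e.2 then (1:ℝ) else 0) = inDeg S m := by
  classical
  have h1 : ∑ e ∈ S, (if m = e.2 then (1:ℝ) else 0)
      = ∑ e : Fin N × Fin N, (if e ∈ S then (if m = e.2 then (1:ℝ) else 0) else 0) := by
    rw [Finset.sum_ite_mem, Finset.univ_inter]
  rw [h1, Fintype.sum_prod_type]
  have step : ∀ h : Fin N,
      (∑ j : Fin N, if (h, j) ∈ S then (if m = j then (1:ℝ) else 0) else 0)
      = if (h, m) ∈ S then (1:ℝ) else 0 := by
    intro h
    have : ∀ j : Fin N, (if (h, j) ∈ S then (if m = j then (1:ℝ) else 0) else 0)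
        = if m = j then (if (h, j) ∈ S then (1:ℝ) else 0) else 0 := by
      intro j; split_ifs <;> rfl
    rw [Finset.sum_congr rfl fun j _ => this j, Finset.sum_ite_eq]
    simp
  rw [Finset.sum_congr rfl fun h _ => step h, inDeg, Finset.card_filter]
  push_cast
  rfl

lemma sum_fiber_fst (S : Finset (Fin N × Fin N)) (m : Fin N) :
    ∑ e ∈ S, (if m = e.1 then (1:ℝ) else 0) = outDeg S m := by
  classical
  have h1 : ∑ e ∈ S, (if m = e.1 then (1:ℝ) else 0)
      = ∑ e : Fin N × Fin N, (if e ∈ S then (if m = e.1 then (1:ℝ) else 0) else 0) := by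
    rw [Finset.sum_ite_mem, Finset.univ_inter]
  rw [h1, Fintype.sum_prod_type]
  have step : ∀ h : Fin N,
      (∑ j : Fin N, if (h, j) ∈ S then (if m = h then (1:ℝ) else 0) else 0)
      = if m = h then (∑ j : Fin N, if (h, j) ∈ S then (1:ℝ) else 0) else 0 := by
    intro h; by_cases hm : m = h <;> simp [hm]
  rw [Finset.sum_congr rfl fun h _ => step h, Finset.sum_ite_eq]
  simp only [Finset.mem_univ, if_pos]
  rw [outDeg, Finset.card_filter]
  push_cast
  rfl

lemma inDeg_split (E E' : Finset (Fin N × Fin N)) (hsub : E' ⊆ E) (m : Fin N) :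
    inDeg E m = inDeg E' m + inDeg (E \ E') m := by
  classical
  unfold inDeg
  rw [← Finset.card_union_of_disjoint]
  · congr 1
    ext h
    simp only [Finset.mem_union, Finset.mem_filter, Finset.mem_univ, true_and,
      Finset.mem_sdiff]
    constructor
    · intro hE; by_cases h' : (h, m) ∈ E' <;> tauto
    · rintro (h' | ⟨hE, _⟩)
      · exact hsub h'
      · exact hE
  · rw [Finset.disjoint_left]
    intro p hp hq
    simp only [Finset.mem_filter, Finset.mem_sdiff] at hp hq
    exact hq.2.2 hp.2

lemma outDeg_split (E E' : Finset (Fin N × Fin N)) (hsub : E' ⊆ E) (m : Fin N) :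
    outDeg E m = outDeg E' m + outDeg (E \ E') m := by
  classical
  unfold outDeg
  rw [← Finset.card_union_of_disjoint]
  · congr 1
    ext h
    simp only [Finset.mem_union, Finset.mem_filter, Finset.mem_univ, true_and,
      Finset.mem_sdiff]
    constructor
    · intro hE; by_cases h' : (m, h) ∈ E' <;> tauto
    · rintro (h' | ⟨hE, _⟩)
      · exact hsub h'
      · exact hE
  · rw [Finset.disjoint_left]
    intro p hp hq
    simp only [Finset.mem_filter, Finset.mem_sdiff] at hp hq
    exact hq.2.2 hp.2

lemma colSum_M (E E' : Finset (Fin N × Fin N)) (hbi : IsBilevel E E') (j : Fin N) :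
    ∑ h, (lapE E' + sigmaE E' + pE E E') h j = (inDeg E j : ℝ) - outDeg E j := by
  classical
  have htopo' : ∀ e ∈ E', e.1 < e.2 := fun e he => hbi.topo e (hbi.base_subset he)
  have hP : ∑ h, pE E E' h j = (inDeg (E \ E') j : ℝ) - outDeg (E \ E') j := by
    have happ : ∀ h, pE E E' h j = ∑ e ∈ E \ E', pijM N e.1 e.2 h j := by
      intro h
      simp [pE, Matrix.sum_apply]
    rw [Finset.sum_congr rfl fun h _ => happ h, Finset.sum_comm]
    have inner : ∀ e ∈ E \ E', ∑ h, pijM N e.1 e.2 h j =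
        (if j = e.2 then (1:ℝ) else 0) - (if j = e.1 then (1:ℝ) else 0) := by
      intro e he
      exact colSum_pijM _ _ _ (ne_of_lt (hbi.topo e (Finset.mem_sdiff.1 he).1))
    rw [Finset.sum_congr rfl inner, Finset.sum_sub_distrib, sum_fiber_snd, sum_fiber_fst]
  have hadd : ∀ h, (lapE E' + sigmaE E' + pE E E') h j
      = lapE E' h j + sigmaE E' h j + pE E E' h j := fun h => rfl
  rw [Finset.sum_congr rfl fun h _ => hadd h, Finset.sum_add_distrib,
    Finset.sum_add_distrib, colSum_lapE, colSum_sigmaE E' htopo', hP,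
    inDeg_split E E' hbi.base_subset j, outDeg_split E E' hbi.base_subset j]
  push_cast
  ring

lemma sum_prod_card (E : Finset (Fin N × Fin N)) :
    ∑ h : Fin N, ∑ j : Fin N, (if (h, j) ∈ E then (1:ℕ) else 0) = E.card := by
  classical
  have h1 : ∑ p : Fin N × Fin N, (if p ∈ E then (1:ℕ) else 0)
      = ∑ h : Fin N, ∑ j : Fin N, (if (h, j) ∈ E then (1:ℕ) else 0) :=
    Fintype.sum_prod_type (f := fun p => if p ∈ E then (1:ℕ) else 0)
  rw [← h1, ← Finset.card_filter]
  congr 1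
  ext p
  simp

lemma sum_inDeg_eq (E : Finset (Fin N × Fin N)) : ∑ j, inDeg E j = E.card := by
  classical
  unfold inDeg
  simp_rw [Finset.card_filter]
  rw [Finset.sum_comm]
  exact sum_prod_card E

lemma sum_outDeg_eq (E : Finset (Fin N × Fin N)) : ∑ j, outDeg E j = E.card := by
  classical
  unfold outDeg
  simp_rw [Finset.card_filter]
  exact sum_prod_card E

end AuxLemmas

/-- **Proposition 3.10.** Along the graph-based Douglas–Rachford iteration, for all
`k ≥ 1`, `‖∑_i a_i^k‖² ≤ (U_G² N²/σ²) Var(x^k)`; in particular, if `x_1^k = ⋯ = x_N^k =: x*`, then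
`x*` solves `0 ∈ (A_1 + ⋯ + A_N)x*`. -/
theorem graphDRS_unbalance_bound
    {H : Type*} [NormedAddCommGroup H] [InnerProductSpace ℝ H] [CompleteSpace H]
    (N : ℕ) (hN : 2 ≤ N) (E E' : Finset (Fin N × Fin N)) (hbi : IsBilevel E E')
    (Z : Matrix (Fin N) (Fin (N - 1)) ℝ) (hZ : ZOnto E' Z)
    (A : Fin N → H → Set H) (hA : ∀ i, IsMaxMonotone (A i))
    (hzer : SumZerNonempty A)
    (σ : ℝ) (hσ : 0 < σ)
    (θ : ℕ → ℝ) (hθ : ∀ k, θ k ∈ Set.Ioc (0 : ℝ) 2)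
    (hθdiv : Tendsto (fun n => ∑ k ∈ Finset.range n, θ k * (2 - θ k)) atTop atTop)
    (x a : ℕ → Fin N → H) (w : ℕ → Fin (N - 1) → H)
    (hiter : IsGDR E E' Z A σ θ x a w) (k : ℕ) :
    ‖∑ i, a (k + 1) i‖ ^ 2 ≤ (unbalance E) ^ 2 * (N : ℝ) ^ 2 / σ ^ 2 * stateVar (x (k + 1)) ∧
    (∀ xs : H, (∀ i, x (k + 1) i = xs) →
      ∃ b : Fin N → H, (∀ i, b i ∈ A i xs) ∧ ∑ i, b i = 0) := by
  classical
  obtain ⟨hmem, hres, hupd⟩ := hiter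
  have hN0 : (0:ℝ) < N := by exact_mod_cast Nat.lt_of_lt_of_le (by norm_num) hN
  set c : Fin N → ℝ := fun j => (inDeg E j : ℝ) - outDeg E j with hc
  set y : Fin N → H := fun i => x (k+1) i - (N:ℝ)⁻¹ • ∑ j, x (k+1) j with hy
  set S : H := ∑ i, a (k+1) i with hS
  -- Z has zero column sums
  have hZ0 : ∀ m, ∑ h, Z h m = 0 := by
    have h1 : Z.transpose.mulVec (fun _ => (1:ℝ)) = 0 := (hZ.2 _).2 ⟨1, rfl⟩
    intro m
    have h2 := congrFun h1 m
    simpa [Matrix.mulVec, Matrix.transpose_apply, dotProduct] using h2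
  -- sum the residual equation over all rows
  have hsum : ∑ j, c j • x (k+1) j + σ • S = 0 := by
    have h1 := congrArg (fun v : Fin N → H => ∑ h, v h) (hres k)
    simp only [Pi.add_apply, Pi.smul_apply] at h1
    rw [Finset.sum_add_distrib] at h1
    have hL : ∑ h, matVecH (lapE E' + sigmaE E' + pE E E') (x (k+1)) h
        = ∑ j, c j • x (k+1) j := by
      simp only [matVecH]
      rw [Finset.sum_comm]
      refine Finset.sum_congr rfl fun j _ => ?_
      rw [← Finset.sum_smul, colSum_M E E' hbi j]
    have hR : ∑ h, matVecH Z (w k) h = 0 := by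
      simp only [matVecH]
      rw [Finset.sum_comm]
      refine Finset.sum_eq_zero fun m _ => ?_
      rw [← Finset.sum_smul, hZ0 m, zero_smul]
    have hsmul : ∑ h, σ • a (k+1) h = σ • S := by
      rw [hS, Finset.smul_sum]
    rw [hL, hsmul, hR] at h1
    exact h1
  have hcsum : ∑ j, c j = 0 := by
    simp only [hc]
    rw [Finset.sum_sub_distrib, ← Nat.cast_sum, ← Nat.cast_sum,
      sum_inDeg_eq, sum_outDeg_eq, sub_self]
  have hkey : ∑ j, c j • y j = -(σ • S) := by
    have h2 : ∑ j, c j • y j = ∑ j, c j • x (k+1) j := by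
      simp only [hy, smul_sub]
      rw [Finset.sum_sub_distrib, ← Finset.sum_smul, hcsum, zero_smul, sub_zero]
    rw [h2]
    exact eq_neg_of_add_eq_zero_left hsum
  have hnorm : σ^2 * ‖S‖^2 ≤ (∑ j, c j ^ 2) * ∑ j, ‖y j‖^2 := by
    have h1 : ‖∑ j, c j • y j‖ ≤ ∑ j, |c j| * ‖y j‖ := by
      refine (norm_sum_le _ _).trans (le_of_eq ?_)
      exact Finset.sum_congr rfl fun j _ => by rw [norm_smul, Real.norm_eq_abs]
    have h2 : (∑ j, |c j| * ‖y j‖)^2 ≤ (∑ j, |c j|^2) * ∑ j, ‖y j‖^2 :=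
      Finset.sum_mul_sq_le_sq_mul_sq _ _ _
    have h3 : ‖∑ j, c j • y j‖ = σ * ‖S‖ := by
      rw [hkey, norm_neg, norm_smul, Real.norm_eq_abs, abs_of_pos hσ]
    have h4 : (σ * ‖S‖)^2 ≤ (∑ j, |c j| * ‖y j‖)^2 := by
      rw [← h3]
      exact pow_le_pow_left₀ (norm_nonneg _) h1 2
    have h5 : (∑ j, |c j|^2) = ∑ j, c j ^ 2 :=
      Finset.sum_congr rfl fun j _ => sq_abs _
    calc σ^2 * ‖S‖^2 = (σ * ‖S‖)^2 := by ring
      _ ≤ (∑ j, |c j| * ‖y j‖)^2 := h4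
      _ ≤ (∑ j, |c j|^2) * ∑ j, ‖y j‖^2 := h2
      _ = (∑ j, c j ^ 2) * ∑ j, ‖y j‖^2 := by rw [h5]
  have hVar : stateVar (x (k+1)) = (N:ℝ)⁻¹ * ∑ j, ‖y j‖^2 := rfl
  have hU : (unbalance E)^2 = (N:ℝ)⁻¹ * ∑ j, c j ^ 2 := by
    rw [unbalance, Real.sq_sqrt (by positivity)]
    congr 1
    exact Finset.sum_congr rfl fun j _ => by rw [hc]; ring
  have hRHS : (unbalance E)^2 * (N:ℝ)^2 / σ^2 * stateVar (x (k+1))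
      = (∑ j, c j ^ 2) * (∑ j, ‖y j‖^2) / σ^2 := by
    rw [hU, hVar]
    field_simp
  have goal1 : ‖S‖^2 ≤ (unbalance E)^2 * (N:ℝ)^2 / σ^2 * stateVar (x (k+1)) := by
    rw [hRHS, le_div_iff₀ (by positivity)]
    nlinarith [hnorm]
  refine ⟨goal1, fun xs hxs => ?_⟩
  have hy0 : ∀ j, y j = 0 := by
    intro j
    have hsx : ∑ j, x (k+1) j = (N:ℝ) • xs := by
      rw [Finset.sum_congr rfl fun j _ => hxs j, Finset.sum_const,
        Finset.card_univ, Fintype.card_fin, ← Nat.cast_smul_eq_nsmul ℝ]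
    simp only [hy, hxs j, hsx, smul_smul,
      inv_mul_cancel₀ (ne_of_gt hN0), one_smul, sub_self]
  have hS0 : S = 0 := by
    have h0 : ∑ j, ‖y j‖^2 = 0 :=
      Finset.sum_eq_zero fun j _ => by rw [hy0 j]; simp
    have h1 : σ^2 * ‖S‖^2 ≤ 0 := by rw [h0, mul_zero] at hnorm; exact hnorm
    have h2 : ‖S‖^2 ≤ 0 := by
      by_contra hpos
      push_neg at hpos
      exact absurd h1 (not_le.2 (mul_pos (pow_pos hσ 2) hpos))
    have h3 : ‖S‖^2 = 0 := le_antisymm h2 (by positivity)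
    exact norm_eq_zero.1 ((pow_eq_zero_iff (by norm_num : (2:ℕ) ≠ 0)).1 h3)
  exact ⟨a (k+1), fun i => (hxs i) ▸ hmem k i, hS0⟩
end

section
/- Let biG = (𝒩, ℰ, ℰ′) be a bilevel graph on 𝒩 = {1,…,N} with N ≥ 2, with associated matrices Σ and P. Then for every j ∈ {1,…,N}, Σ_{i=1}^N (Σ + P)_{ij} = d_j⁺ − d_j⁻, where d_j⁺ and d_j⁻ are the in- and out-degree of node j in the state graph G. Consequently, the Euclidean norm of the row vector 1ᵀ(Σ + P) ∈ ℝ^N equals √N · U_G. -/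
open scoped InnerProductSpace Topology
open Filter

/-! Since every edge goes from a smaller to a larger node, `Σ` is the signed incidence pattern
`Σ_{ij} = [(i,j) ∈ ℰ′] − [(j,i) ∈ ℰ′]`, so its column sums are `d⁺ − d⁻` of the base graph.
Each `P^{ab}` adds `+1` to column `b` and `−1` to column `a`, which supplies the missing edges
of `ℰ ∖ ℰ′`. The norm identity is then `√(∑ x²) = √N · √((1/N) ∑ x²)`. -/

open Finset

lemma sigmaE_apply_of_lt {N : ℕ} {E' : Finset (Fin N × Fin N)} (htopo : ∀ e ∈ E', e.1 < e.2)
    (i j : Fin N) :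
    sigmaE E' i j = (if (i, j) ∈ E' then 1 else 0) - (if (j, i) ∈ E' then 1 else 0) := by
  have hij : (i, j) ∈ E' → i < j := htopo _
  have hji : (j, i) ∈ E' → j < i := htopo _
  unfold sigmaE lapE
  rcases lt_trichotomy i j with h | rfl | h
  · have : (j, i) ∉ E' := fun hm => (hji hm).not_gt h
    by_cases hm : (i, j) ∈ E' <;> simp [h, h.ne, this, hm]
  · have : (i, i) ∉ E' := fun hm => (hij hm).false
    simp [this]
  · have : (i, j) ∉ E' := fun hm => (hij hm).not_gt h
    by_cases hm : (j, i) ∈ E' <;> simp [h, h.ne', h.not_gt, this, hm]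

lemma sum_sigmaE_apply {N : ℕ} {E' : Finset (Fin N × Fin N)} (htopo : ∀ e ∈ E', e.1 < e.2)
    (j : Fin N) :
    ∑ i, sigmaE E' i j = (inDeg E' j : ℝ) - outDeg E' j := by
  simp only [sigmaE_apply_of_lt htopo, sum_sub_distrib, sum_boole, inDeg, outDeg]

lemma inDeg_eq_card_filter {N : ℕ} (S : Finset (Fin N × Fin N)) (j : Fin N) :
    inDeg S j = #{e ∈ S | e.2 = j} := by
  refine card_nbij' (fun h => (h, j)) Prod.fst ?_ ?_ (fun _ _ => rfl) ?_
  · intro h hh; simpa using hh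
  · rintro ⟨h, k⟩ he
    obtain ⟨he, rfl⟩ : (h, k) ∈ S ∧ k = j := by simpa using he
    simpa using he
  · rintro ⟨h, k⟩ he
    obtain ⟨-, rfl⟩ : (h, k) ∈ S ∧ k = j := by simpa using he
    rfl

lemma outDeg_eq_card_filter {N : ℕ} (S : Finset (Fin N × Fin N)) (j : Fin N) :
    outDeg S j = #{e ∈ S | e.1 = j} := by
  refine card_nbij' (fun h => (j, h)) Prod.snd ?_ ?_ (fun _ _ => rfl) ?_
  · intro h hh; simpa using hh
  · rintro ⟨k, h⟩ he
    obtain ⟨he, rfl⟩ : (k, h) ∈ S ∧ k = j := by simpa using he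
    simpa using he
  · rintro ⟨k, h⟩ he
    obtain ⟨-, rfl⟩ : (k, h) ∈ S ∧ k = j := by simpa using he
    rfl

lemma inDeg_sub_outDeg_eq_sum {N : ℕ} (S : Finset (Fin N × Fin N)) (j : Fin N) :
    (inDeg S j : ℝ) - outDeg S j
      = ∑ e ∈ S, ((if e.2 = j then 1 else 0) - (if e.1 = j then 1 else 0)) := by
  rw [sum_sub_distrib, sum_boole, sum_boole, inDeg_eq_card_filter, outDeg_eq_card_filter]

lemma pijM_apply_of_ne {N : ℕ} {a b : Fin N} (hab : a ≠ b) (i j : Fin N) :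
    pijM N a b i j = (if i = a ∧ j = a then 1 else 0)
      + (if i = b then (if j = b then 1 else 0) - (if j = a then 2 else 0) else 0) := by
  unfold pijM
  split_ifs <;> grind

lemma sum_pijM_apply {N : ℕ} {a b : Fin N} (hab : a ≠ b) (j : Fin N) :
    ∑ i, pijM N a b i j = (if b = j then 1 else 0) - (if a = j then 1 else 0) := by
  simp only [pijM_apply_of_ne hab, sum_add_distrib, ite_and, sum_ite_eq', mem_univ, if_true]
  split_ifs <;> grind

lemma sum_pE_apply {N : ℕ} {E E' : Finset (Fin N × Fin N)} (hsub : E' ⊆ E)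
    (hloop : ∀ e ∈ E, e.1 ≠ e.2) (j : Fin N) :
    ∑ i, pE E E' i j
      = ((inDeg E j : ℝ) - outDeg E j) - ((inDeg E' j : ℝ) - outDeg E' j) := by
  have hcol : ∀ e ∈ E \ E', ∑ i, pijM N e.1 e.2 i j
      = (if e.2 = j then 1 else 0) - (if e.1 = j then 1 else 0) :=
    fun e he => sum_pijM_apply (hloop e (mem_sdiff.1 he).1) j
  rw [inDeg_sub_outDeg_eq_sum, inDeg_sub_outDeg_eq_sum, ← sum_sdiff_eq_sub hsub,
    ← sum_congr rfl hcol, pE, sum_comm]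
  simp only [Matrix.sum_apply]

lemma Real.sqrt_sum_eq_sqrt_card_mul_sqrt_mean {ι : Type*} [Fintype ι] (f : ι → ℝ) :
    √(∑ i, f i) = √(Fintype.card ι) * √((Fintype.card ι : ℝ)⁻¹ * ∑ i, f i) := by
  rw [← Real.sqrt_mul (Nat.cast_nonneg _), ← mul_assoc]
  rcases isEmpty_or_nonempty ι with hι | hι
  · simp
  · rw [mul_inv_cancel₀ (by positivity), one_mul]

theorem column_sums_and_unbalance_general
    (N : ℕ) (E E' : Finset (Fin N × Fin N)) (hbi : IsBilevel E E') :
    (∀ j : Fin N,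
      ∑ i, (sigmaE E' + pE E E') i j = (inDeg E j : ℝ) - (outDeg E j : ℝ)) ∧
    Real.sqrt (∑ j, (∑ i, (sigmaE E' + pE E E') i j) ^ 2)
      = Real.sqrt N * unbalance E := by
  have hcol : ∀ j : Fin N,
      ∑ i, (sigmaE E' + pE E E') i j = (inDeg E j : ℝ) - (outDeg E j : ℝ) := by
    intro j
    have htopo : ∀ e ∈ E', e.1 < e.2 := fun e he => hbi.topo e (hbi.base_subset he)
    have hloop : ∀ e ∈ E, e.1 ≠ e.2 := fun e he => (hbi.topo e he).ne
    simp only [Matrix.add_apply, sum_add_distrib, sum_sigmaE_apply htopo,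
      sum_pE_apply hbi.base_subset hloop]
    ring
  refine ⟨hcol, ?_⟩
  have hsq : ∀ j, (∑ i, (sigmaE E' + pE E E') i j) ^ 2 = ((outDeg E j : ℝ) - inDeg E j) ^ 2 :=
    fun j => by rw [hcol j]; ring
  simpa only [hsq, Fintype.card_fin, unbalance] using Real.sqrt_sum_eq_sqrt_card_mul_sqrt_mean
    fun j => ((outDeg E j : ℝ) - inDeg E j) ^ 2

/-- For a bilevel graph, `∑_i (Σ + P)_{ij} = d_j⁺ − d_j⁻` for every node `j`,
and consequently the Euclidean norm of the row vector `1ᵀ(Σ + P)` equals `√N · U_G`. -/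
theorem column_sums_and_unbalance
    (N : ℕ) (hN : 2 ≤ N) (E E' : Finset (Fin N × Fin N)) (hbi : IsBilevel E E') :
    (∀ j : Fin N,
      ∑ i, (sigmaE E' + pE E E') i j = (inDeg E j : ℝ) - (outDeg E j : ℝ)) ∧
    Real.sqrt (∑ j, (∑ i, (sigmaE E' + pE E E') i j) ^ 2)
      = Real.sqrt N * unbalance E :=
  column_sums_and_unbalance_general N E E' hbi
end

section
/- Let biG = (𝒩, ℰ, ℰ′) be a bilevel graph on 𝒩 = {1,…,N} with N ≥ 2 and Laplacian L of the base graph G′, and let L = Z Zᵀ = Z̃ Z̃ᵀ with Z, Z̃ ∈ ℝ^{N×(N−1)} of full rank, related by Z̃ = Z O for an orthogonal matrix O ∈ ℝ^{(N−1)×(N−1)}. Let A_1, …, A_N be maximal monotone operators on a real Hilbert space H, σ > 0, θ_k ∈ (0,2], and let (x^k, w^k) and (x̃^k, w̃^k) be the sequences generated by the graph-based Douglas–Rachford iteration with respect to Z and Z̃ respectively. If w^0 = (O⊗I)w̃^0, then for every k ∈ ℕ, w^k = (O⊗I)w̃^k and x^k = x̃^k. -/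
open scoped InnerProductSpace Topology
open Filter

/-!
With the topological ordering, `L + Σ + P = ∑_{(i,j) ∈ ℰ} P^{ij}`, and
`⟨(P^{ij} ⊗ I) u, u⟩ = ‖u_i - u_j‖²`. If two states solve the resolvent equation with the same
right-hand side, monotonicity makes their difference `u` satisfy `∑_{ℰ} ‖u_i - u_j‖² ≤ 0`, so `u`
is constant on the connected state graph; the first node has only outgoing edges, which forces
the constant to vanish. Hence `x^{k+1}` is determined by `(Z ⊗ I) w^k`, which does not change
under `Z ↦ Z O`, `w ↦ (O ⊗ I) w`; since `O Oᵀ = 1` the update of `w` commutes with `O ⊗ I`.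
-/

open Finset

lemma pijM_apply_of_ne_s16 {N : ℕ} {h k : Fin N} (hhk : h ≠ k) (p q : Fin N) :
    pijM N p q h k = if (p, q) = (k, h) then -2 else 0 := by
  grind [pijM]

lemma pijM_apply_self {N : ℕ} {p q : Fin N} (hpq : p ≠ q) (h : Fin N) :
    pijM N p q h h = (if p = h then 1 else 0) + (if q = h then 1 else 0) := by
  grind [pijM]

lemma degE_eq_card_out_add_card_in {N : ℕ} {E : Finset (Fin N × Fin N)}
    (htopo : ∀ e ∈ E, e.1 < e.2) (h : Fin N) :
    degE E h = #(E.filter (·.1 = h)) + #(E.filter (·.2 = h)) := by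
  have hout : #(E.filter (·.1 = h)) = #(univ.filter fun j => (h, j) ∈ E) :=
    card_nbij' Prod.snd (Prod.mk h) (fun e => by grind [coe_filter]) (fun j => by simp)
      (fun e => by grind [coe_filter]) (fun j => by simp)
  have hin : #(E.filter (·.2 = h)) = #(univ.filter fun j => (j, h) ∈ E) :=
    card_nbij' Prod.fst (fun j => (j, h)) (fun e => by grind [coe_filter]) (fun j => by simp)
      (fun e => by grind [coe_filter]) (fun j => by simp)
  rw [hout, hin, degE, ← card_union_of_disjoint]
  · congr 1
    ext j
    have := htopo (h, j)
    have := htopo (j, h)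
    simp only [mem_filter, mem_univ, true_and, mem_union]
    grind
  · rw [disjoint_filter]
    intro j _ hhj hjh
    exact lt_asymm (htopo _ hhj) (htopo _ hjh)

lemma lapE_add_sigmaE_eq_sum_pijM {N : ℕ} {E : Finset (Fin N × Fin N)}
    (htopo : ∀ e ∈ E, e.1 < e.2) : lapE E + sigmaE E = ∑ e ∈ E, pijM N e.1 e.2 := by
  ext h k
  rw [Matrix.sum_apply, Matrix.add_apply]
  by_cases hhk : h = k
  · subst hhk
    rw [sum_congr rfl fun e he => pijM_apply_self (htopo e he).ne h, sum_add_distrib,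
      sum_boole, sum_boole, ← Nat.cast_add, ← degE_eq_card_out_add_card_in htopo]
    simp [lapE, sigmaE]
  · rw [sum_congr rfl fun e _ => pijM_apply_of_ne_s16 hhk e.1 e.2, sum_ite_eq']
    have := htopo (h, k)
    have := htopo (k, h)
    rcases lt_or_gt_of_ne hhk with hlt | hlt <;> grind [lapE, sigmaE]

lemma lapE_add_sigmaE_add_pE {N : ℕ} {E E' : Finset (Fin N × Fin N)} (hsub : E' ⊆ E)
    (htopo : ∀ e ∈ E, e.1 < e.2) :
    lapE E' + sigmaE E' + pE E E' = ∑ e ∈ E, pijM N e.1 e.2 := by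
  rw [lapE_add_sigmaE_eq_sum_pijM fun e he => htopo e (hsub he), pE, add_comm,
    sum_sdiff hsub]

lemma SimpleGraph.Preconnected.apply_eq_of_forall_adj {V α : Type*} {G : SimpleGraph V}
    (hG : G.Preconnected) {f : V → α} (hf : ∀ i j, G.Adj i j → f i = f j) (i j : V) :
    f i = f j := by
  obtain ⟨p⟩ := hG i j
  induction p with
  | nil => rfl
  | cons h _ ih => exact (hf _ _ h).trans ih

lemma card_edges_from_zero_pos {N : ℕ} (hN : 2 ≤ N) {E : Finset (Fin N × Fin N)}
    (htopo : ∀ e ∈ E, e.1 < e.2) (hconn : (graphOf E).Connected) :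
    0 < #(E.filter (·.1 = ⟨0, by omega⟩)) := by
  have : Nontrivial (Fin N) := Fin.nontrivial_iff_two_le.2 hN
  obtain ⟨j, -, hj | hj⟩ := hconn.preconnected.exists_adj_of_nontrivial ⟨0, by omega⟩
  · exact card_pos.2 ⟨_, mem_filter.2 ⟨hj, rfl⟩⟩
  · exact absurd (htopo _ hj) (Nat.not_lt_zero _)

section InnerProduct

variable {H : Type*} [NormedAddCommGroup H] [InnerProductSpace ℝ H]

lemma matVecH_mul {N M K : ℕ} (A : Matrix (Fin N) (Fin M) ℝ) (B : Matrix (Fin M) (Fin K) ℝ)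
    (v : Fin K → H) : matVecH (A * B) v = matVecH A (matVecH B v) := by
  funext h
  simp only [matVecH, Matrix.mul_apply, sum_smul, smul_sum, mul_smul]
  exact sum_comm

lemma matVecH_one {N : ℕ} (v : Fin N → H) : matVecH 1 v = v := by
  funext h
  simp [matVecH, Matrix.one_apply, ite_smul]

lemma matVecH_sub {N M : ℕ} (Q : Matrix (Fin N) (Fin M) ℝ) (v v' : Fin M → H) :
    matVecH Q (v - v') = matVecH Q v - matVecH Q v' := by
  funext h
  simp only [matVecH, Pi.sub_apply, smul_sub, sum_sub_distrib]

lemma matVecH_smul {N M : ℕ} (Q : Matrix (Fin N) (Fin M) ℝ) (c : ℝ) (v : Fin M → H) :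
    matVecH Q (c • v) = c • matVecH Q v := by
  funext h
  simp only [matVecH, Pi.smul_apply, smul_sum, smul_smul, mul_comm]

lemma matVecH_sum {N M : ℕ} {ι : Type*} (s : Finset ι) (Q : ι → Matrix (Fin N) (Fin M) ℝ)
    (v : Fin M → H) : matVecH (∑ e ∈ s, Q e) v = ∑ e ∈ s, matVecH (Q e) v := by
  funext h
  simp only [matVecH, Matrix.sum_apply, sum_smul, Finset.sum_apply]
  exact sum_comm

lemma matVecH_pijM {N : ℕ} {p q : Fin N} (hpq : p ≠ q) (u : Fin N → H) :
    matVecH (pijM N p q) u = Pi.single p (u p) + Pi.single q (u q - (2 : ℝ) • u p) := by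
  funext h
  by_cases hp : h = p
  · subst hp
    simp [matVecH, pijM, hpq, ite_smul]
  by_cases hq : h = q
  · subst hq
    simp only [matVecH, pijM, ite_smul, one_smul, zero_smul]
    rw [Fintype.sum_eq_add h p (Ne.symm hpq) (by grind)]
    simp [hpq, Ne.symm hpq, sub_eq_add_neg]
  · simp [matVecH, pijM, hp, hq]

lemma sum_inner_single_left {N : ℕ} (p : Fin N) (v : H) (u : Fin N → H) :
    ∑ i, ⟪(Pi.single p v : Fin N → H) i, u i⟫_ℝ = ⟪v, u p⟫_ℝ := by
  rw [Fintype.sum_eq_single p fun i hi => by simp [hi]]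
  simp

lemma sum_inner_matVecH_pijM {N : ℕ} {p q : Fin N} (hpq : p ≠ q) (u : Fin N → H) :
    ∑ i, ⟪matVecH (pijM N p q) u i, u i⟫_ℝ = ‖u p - u q‖ ^ 2 := by
  simp only [matVecH_pijM hpq, Pi.add_apply, inner_add_left, sum_add_distrib,
    sum_inner_single_left]
  rw [norm_sub_sq_real, inner_sub_left, real_inner_smul_left, real_inner_self_eq_norm_sq,
    real_inner_self_eq_norm_sq, real_inner_comm]
  ring

lemma sum_inner_matVecH_sum_pijM {N : ℕ} {E : Finset (Fin N × Fin N)}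
    (htopo : ∀ e ∈ E, e.1 < e.2) (u : Fin N → H) :
    ∑ i, ⟪matVecH (∑ e ∈ E, pijM N e.1 e.2) u i, u i⟫_ℝ = ∑ e ∈ E, ‖u e.1 - u e.2‖ ^ 2 := by
  simp only [matVecH_sum, Finset.sum_apply, sum_inner]
  rw [sum_comm]
  exact sum_congr rfl fun e he => sum_inner_matVecH_pijM (htopo e he).ne u

lemma matVecH_sum_pijM_const_apply_of_forall_snd_ne {N : ℕ} {E : Finset (Fin N × Fin N)}
    (htopo : ∀ e ∈ E, e.1 < e.2) (c : H) {h : Fin N} (hin : ∀ e ∈ E, e.2 ≠ h) :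
    matVecH (∑ e ∈ E, pijM N e.1 e.2) (fun _ => c) h = #(E.filter (·.1 = h)) • c := by
  simp only [matVecH_sum, Finset.sum_apply]
  rw [card_eq_sum_ones, sum_smul, sum_filter]
  refine sum_congr rfl fun e he => ?_
  rw [matVecH_pijM (htopo e he).ne]
  simp [Pi.single_apply, hin e he, eq_comm]

lemma apply_eq_of_sum_inner_matVecH_nonpos {N : ℕ} {E : Finset (Fin N × Fin N)}
    (htopo : ∀ e ∈ E, e.1 < e.2) (hconn : (graphOf E).Connected) {u : Fin N → H}
    (hu : ∑ i, ⟪matVecH (∑ e ∈ E, pijM N e.1 e.2) u i, u i⟫_ℝ ≤ 0) (i j : Fin N) :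
    u i = u j := by
  rw [sum_inner_matVecH_sum_pijM htopo] at hu
  have hedge : ∀ e ∈ E, u e.1 = u e.2 := fun e he => by
    have := (sum_eq_zero_iff_of_nonneg fun e _ => sq_nonneg ‖u e.1 - u e.2‖).1
      (le_antisymm hu (sum_nonneg fun e _ => sq_nonneg _)) e he
    rwa [sq_eq_zero_iff, norm_eq_zero, sub_eq_zero] at this
  refine hconn.preconnected.apply_eq_of_forall_adj (fun a b hab => ?_) i j
  rcases hab.2 with h | h
  exacts [hedge _ h, (hedge _ h).symm]

lemma eq_zero_of_forall_inner_matVecH_nonpos {N : ℕ} (hN : 2 ≤ N) {E : Finset (Fin N × Fin N)}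
    (htopo : ∀ e ∈ E, e.1 < e.2) (hconn : (graphOf E).Connected) {u : Fin N → H}
    (hu : ∀ i, ⟪matVecH (∑ e ∈ E, pijM N e.1 e.2) u i, u i⟫_ℝ ≤ 0) : u = 0 := by
  set i₀ : Fin N := ⟨0, by omega⟩
  have hconst : u = fun _ => u i₀ :=
    funext (apply_eq_of_sum_inner_matVecH_nonpos htopo hconn (sum_nonpos fun i _ => hu i) · i₀)
  have hin : ∀ e ∈ E, e.2 ≠ i₀ := fun e he h => Nat.not_lt_zero _ (h ▸ htopo e he)
  have hu₀ := hu i₀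
  rw [hconst, matVecH_sum_pijM_const_apply_of_forall_snd_ne htopo _ hin,
    ← Nat.cast_smul_eq_nsmul ℝ, real_inner_smul_left, real_inner_self_eq_norm_sq] at hu₀
  have hpos : (0 : ℝ) < #(E.filter (·.1 = i₀)) := by
    exact_mod_cast card_edges_from_zero_pos hN htopo hconn
  have hi₀ : u i₀ = 0 := by
    simpa using nonpos_of_mul_nonpos_right hu₀ hpos
  rw [hconst, hi₀]
  rfl

lemma eq_of_matVecH_add_smul_eq {N : ℕ} (hN : 2 ≤ N) {E E' : Finset (Fin N × Fin N)}
    (hsub : E' ⊆ E) (htopo : ∀ e ∈ E, e.1 < e.2) (hconn : (graphOf E).Connected)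
    {A : Fin N → H → Set H} (hA : ∀ i, IsMonotoneOp (A i)) {σ : ℝ} (hσ : 0 < σ)
    {x x' a a' : Fin N → H} (ha : ∀ i, a i ∈ A i (x i)) (ha' : ∀ i, a' i ∈ A i (x' i))
    (heq : matVecH (lapE E' + sigmaE E' + pE E E') x + σ • a
        = matVecH (lapE E' + sigmaE E' + pE E E') x' + σ • a') :
    x = x' := by
  rw [lapE_add_sigmaE_add_pE hsub htopo] at heq
  have hres : matVecH (∑ e ∈ E, pijM N e.1 e.2) (x - x') = σ • (a' - a) := by
    rw [matVecH_sub, smul_sub]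
    linear_combination (norm := module) heq
  refine sub_eq_zero.1 (eq_zero_of_forall_inner_matVecH_nonpos hN htopo hconn fun i => ?_)
  rw [hres, Pi.smul_apply, real_inner_smul_left, Pi.sub_apply, Pi.sub_apply, ← neg_sub,
    inner_neg_left]
  exact mul_nonpos_of_nonneg_of_nonpos hσ.le (neg_nonpos.2 (hA i _ _ _ _ (ha i) (ha' i)))

end InnerProduct

theorem graphDRS_independent_of_onto_decomposition_general
    {H : Type*} [NormedAddCommGroup H] [InnerProductSpace ℝ H]
    (N : ℕ) (hN : 2 ≤ N) (E E' : Finset (Fin N × Fin N)) (hbi : IsBilevel E E')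
    (Z Zt : Matrix (Fin N) (Fin (N - 1)) ℝ)
    (O : Matrix (Fin (N - 1)) (Fin (N - 1)) ℝ)
    (hO : O * O.transpose = 1)
    (hZtO : Zt = Z * O)
    (A : Fin N → H → Set H) (hA : ∀ i, IsMaxMonotone (A i))
    (σ : ℝ) (hσ : 0 < σ)
    (θ : ℕ → ℝ)
    (x a : ℕ → Fin N → H) (w : ℕ → Fin (N - 1) → H)
    (hiter : IsGDR E E' Z A σ θ x a w)
    (xt at' : ℕ → Fin N → H) (wt : ℕ → Fin (N - 1) → H)
    (hitert : IsGDR E E' Zt A σ θ xt at' wt)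
    (h0 : w 0 = matVecH O (wt 0)) :
    ∀ k : ℕ, w k = matVecH O (wt k) ∧ x (k + 1) = xt (k + 1) := by
  have hx : ∀ k, w k = matVecH O (wt k) → x (k + 1) = xt (k + 1) := fun k hwk =>
    eq_of_matVecH_add_smul_eq hN hbi.base_subset hbi.topo hbi.state_conn (fun i => (hA i).1) hσ
      (hiter.mem k) (hitert.mem k)
      (by rw [hiter.res, hitert.res, hZtO, matVecH_mul, ← hwk])
  have hw : ∀ k, w k = matVecH O (wt k) → x (k + 1) = xt (k + 1) →
      w (k + 1) = matVecH O (wt (k + 1)) := fun k hwk hxk => by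
    rw [hiter.upd, hitert.upd, hwk, hxk, matVecH_sub, matVecH_smul, hZtO, Matrix.transpose_mul,
      matVecH_mul O.transpose, ← matVecH_mul O, hO, matVecH_one]
  intro k
  induction k with
  | zero => exact ⟨h0, hx 0 h0⟩
  | succ k ih =>
    have hwk := hw k ih.1 ih.2
    exact ⟨hwk, hx (k + 1) hwk⟩

/-- **Remark 3.8.** Independence of the graph-based Douglas–Rachford method from
the onto decomposition of the Laplacian: if `L = Z Zᵀ = Z̃ Z̃ᵀ` with `Z̃ = Z O` for an orthogonal
matrix `O`, and `w^0 = (O⊗I)w̃^0`, then `w^k = (O⊗I)w̃^k` and `x^k = x̃^k` for every `k`. -/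
theorem graphDRS_independent_of_onto_decomposition
    {H : Type*} [NormedAddCommGroup H] [InnerProductSpace ℝ H] [CompleteSpace H]
    (N : ℕ) (hN : 2 ≤ N) (E E' : Finset (Fin N × Fin N)) (hbi : IsBilevel E E')
    (Z Zt : Matrix (Fin N) (Fin (N - 1)) ℝ)
    (hZ : Z * Z.transpose = lapE E') (hZt : Zt * Zt.transpose = lapE E')
    (hZrank : Z.rank = N - 1) (hZtrank : Zt.rank = N - 1)
    (O : Matrix (Fin (N - 1)) (Fin (N - 1)) ℝ)
    (hO : O * O.transpose = 1) (hO' : O.transpose * O = 1)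
    (hZtO : Zt = Z * O)
    (A : Fin N → H → Set H) (hA : ∀ i, IsMaxMonotone (A i))
    (σ : ℝ) (hσ : 0 < σ)
    (θ : ℕ → ℝ) (hθ : ∀ k, θ k ∈ Set.Ioc (0 : ℝ) 2)
    (x a : ℕ → Fin N → H) (w : ℕ → Fin (N - 1) → H)
    (hiter : IsGDR E E' Z A σ θ x a w)
    (xt at' : ℕ → Fin N → H) (wt : ℕ → Fin (N - 1) → H)
    (hitert : IsGDR E E' Zt A σ θ xt at' wt)
    (h0 : w 0 = matVecH O (wt 0)) :
    ∀ k : ℕ, w k = matVecH O (wt k) ∧ x (k + 1) = xt (k + 1) :=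
  graphDRS_independent_of_onto_decomposition_general N hN E E' hbi Z Zt O hO hZtO A hA σ hσ θ x a w
    hiter xt at' wt hitert h0
end
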